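/- arXiv:math/0511537 — 7 statements merged into one kernel-verified Lean document; each statement's English description precedes it below -/
import Mathlib

section
/- If λ and μ are partitions contained in the ℓ×k rectangle and the Young diagram of λ (placed at the top-left of the rectangle) intersects the 180-degree rotation of μ (placed at the bottom-right of the rectangle), then for every partition ν contained in the ℓ×k rectangle the Littlewood-Richardson coefficient c^ν_{λ,μ} is zero. -/
/-- `f` is a partition: weakly decreasing and eventually zero (0-indexed parts). -/
def IsPartition (f : ℕ → ℕ) : Prop :=
  (∀ i j, i ≤ j → f j ≤ f i) ∧ ∃ N, ∀ i, N ≤ i → f i = 0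

/-- The partition `f` is contained in the `l × k` rectangle. -/
def InRect (f : ℕ → ℕ) (l k : ℕ) : Prop :=
  IsPartition f ∧ f 0 ≤ k ∧ ∀ i, l ≤ i → f i = 0

/-- Number of nonzero parts of `f`. -/
noncomputable def numParts (f : ℕ → ℕ) : ℕ := {i | f i ≠ 0}.ncard

/-- Number of distinct nonzero part sizes of `f`. -/
noncomputable def numPartSizes (f : ℕ → ℕ) : ℕ := {n | n ≠ 0 ∧ ∃ i, f i = n}.ncard

/-- The cell `c = (i,j)` (0-indexed) lies in the skew shape `ν/λ`. -/
def InSkew (ν lam : ℕ → ℕ) (c : ℕ × ℕ) : Prop := lam c.1 ≤ c.2 ∧ c.2 < ν c.1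

/-- `c'` strictly precedes `c` in the right-to-left, top-to-bottom reading order. -/
def ReadBefore (c' c : ℕ × ℕ) : Prop := c'.1 < c.1 ∨ (c'.1 = c.1 ∧ c.2 < c'.2)

/-- `T` is a Littlewood–Richardson filling of the skew shape `ν/λ` with content `μ`:
a semistandard filling (positive entries, rows weakly increasing, columns strictly
increasing) whose entry `m+1` occurs `μ m` times, and whose right-to-left,
top-to-bottom reading word is a ballot sequence. -/
def IsLRFilling (lam mu ν : ℕ → ℕ) (T : ℕ × ℕ → ℕ) : Prop :=
  (∀ c, ¬ InSkew ν lam c → T c = 0) ∧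
  (∀ c, InSkew ν lam c → 1 ≤ T c) ∧
  (∀ i j j', InSkew ν lam (i, j) → InSkew ν lam (i, j') → j ≤ j' →
      T (i, j) ≤ T (i, j')) ∧
  (∀ i j, InSkew ν lam (i, j) → InSkew ν lam (i + 1, j) → T (i, j) < T (i + 1, j)) ∧
  (∀ m, {c | InSkew ν lam c ∧ T c = m + 1}.Finite ∧
      {c | InSkew ν lam c ∧ T c = m + 1}.ncard = mu m) ∧
  (∀ c, InSkew ν lam c → ∀ m, 1 ≤ m →
      {c' | InSkew ν lam c' ∧ (ReadBefore c' c ∨ c' = c) ∧ T c' = m + 1}.ncard ≤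
      {c' | InSkew ν lam c' ∧ (ReadBefore c' c ∨ c' = c) ∧ T c' = m}.ncard)

/-- The Littlewood–Richardson coefficient `c^ν_{λ,μ}`. -/
noncomputable def lrCoeff (lam mu ν : ℕ → ℕ) : ℕ :=
  Nat.card {T : ℕ × ℕ → ℕ // IsLRFilling lam mu ν T}

/-- Box `c = (i,j)` of the rectangle lies in `λ` placed at the top-left. -/
def InLam (lam : ℕ → ℕ) (c : ℕ × ℕ) : Prop := c.2 < lam c.1

/-- Box `c = (i,j)` of `l × k` lies in `rotate(μ)`, i.e. `μ` rotated 180° and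
placed at the bottom-right. -/
def InRot (mu : ℕ → ℕ) (l k : ℕ) (c : ℕ × ℕ) : Prop := k - mu (l - 1 - c.1) ≤ c.2

/-- The placements of `λ` (top-left) and `rotate(μ)` (bottom-right) in `l × k`
are disjoint. -/
def DisjointPlace (lam mu : ℕ → ℕ) (l k : ℕ) : Prop :=
  ∀ c : ℕ × ℕ, c.1 < l → c.2 < k → ¬ (InLam lam c ∧ InRot mu l k c)

/-- Column `j` of `l × k` is full for `λ ∪ rotate(μ)`. -/
def FullCol (lam mu : ℕ → ℕ) (l k j : ℕ) : Prop :=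
  ∀ i, i < l → (InLam lam (i, j) ∨ InRot mu l k (i, j))

/-- Row `i` of `l × k` is full for `λ ∪ rotate(μ)`. -/
def FullRow (lam mu : ℕ → ℕ) (l k i : ℕ) : Prop :=
  ∀ j, j < k → (InLam lam (i, j) ∨ InRot mu l k (i, j))

/-- `(λ, μ, l × k)` is a basic Richardson quadruple. -/
def BasicRQ (lam mu : ℕ → ℕ) (l k : ℕ) : Prop :=
  InRect lam l k ∧ InRect mu l k ∧ DisjointPlace lam mu l k ∧
  (∀ j, j < k → ¬ FullCol lam mu l k j) ∧ (∀ i, i < l → ¬ FullRow lam mu l k i)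

/-- The rectangle partition `(g^h)`. -/
def rectP (g h : ℕ) : ℕ → ℕ := fun i => if i < h then g else 0

/-- The hook partition `(b, 1^a)`. -/
def hookP (b a : ℕ) : ℕ → ℕ := fun i => if i = 0 then b else if i ≤ a then 1 else 0

/-!
Fix a row `a < l` and put `b = l - 1 - a`. The ballot condition, applied at the last
cell (in reading order) carrying the entry `m + 2` within the first `i + 2` rows, shows
that there are at most as many entries `m + 2` in rows `≤ i + 1` as entries `m + 1` in
rows `≤ i`. Iterating `b` times, the `μ_b` entries `b + 1` of a filling of `ν/λ ⊆ l × k`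
are outnumbered by the entries `1` in rows `≤ a`. These lie in distinct columns, all
in `[λ_a, k)`, so `λ_a + μ_b ≤ k`. A box `(a, j)` common to `λ` and `rotate(μ)` means
precisely `k < λ_a + μ_b`.
-/

lemma IsPartition.antitone {f : ℕ → ℕ} (hf : IsPartition f) : Antitone f :=
  fun _ _ h => hf.1 _ _ h

lemma InRect.apply_le {f : ℕ → ℕ} {l k : ℕ} (hf : InRect f l k) (i : ℕ) : f i ≤ k :=
  (hf.1.antitone (Nat.zero_le i)).trans hf.2.1

lemma exists_readBefore_or_eq_of_finite {S : Set (ℕ × ℕ)} (hS : S.Finite) (hne : S.Nonempty) :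
    ∃ c ∈ S, ∀ c' ∈ S, ReadBefore c' c ∨ c' = c := by
  obtain ⟨c, hc, hmax⟩ :=
    Set.exists_max_image S (fun c : ℕ × ℕ => toLex (c.1, OrderDual.toDual c.2)) hS hne
  refine ⟨c, hc, fun c' hc' => ?_⟩
  rcases Prod.Lex.le_iff.mp (hmax c' hc') with h | ⟨h1, h2⟩
  · exact Or.inl (Or.inl h)
  · rcases (OrderDual.toDual_le_toDual.mp h2).lt_or_eq with h | h
    · exact Or.inl (Or.inr ⟨h1, h⟩)
    · exact Or.inr (Prod.ext h1 h.symm)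

def cellsLabeled (ν lam : ℕ → ℕ) (T : ℕ × ℕ → ℕ) (m i : ℕ) : Set (ℕ × ℕ) :=
  {c | InSkew ν lam c ∧ T c = m + 1 ∧ c.1 ≤ i}

lemma InSkew.of_le_of_le {ν lam : ℕ → ℕ} (hν : Antitone ν) (hlam : Antitone lam)
    {i i' i'' j : ℕ} (hi : i ≤ i') (hi' : i' ≤ i'') (h : InSkew ν lam (i, j))
    (h'' : InSkew ν lam (i'', j)) : InSkew ν lam (i', j) :=
  ⟨(hlam hi).trans h.1, h''.2.trans_le (hν hi')⟩

namespace IsLRFilling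

variable {lam mu ν : ℕ → ℕ} {T : ℕ × ℕ → ℕ}

lemma finite_cellsLabeled (hT : IsLRFilling lam mu ν T) (m i : ℕ) :
    (cellsLabeled ν lam T m i).Finite := by
  obtain ⟨-, -, -, -, hcontent, -⟩ := hT
  exact (hcontent m).1.subset fun _ hc => ⟨hc.1, hc.2.1⟩

lemma ncard_cellsLabeled_of_rows_lt {l : ℕ} (hT : IsLRFilling lam mu ν T)
    (hν : ∀ i, l ≤ i → ν i = 0) (m : ℕ) : (cellsLabeled ν lam T m (l - 1)).ncard = mu m := by
  obtain ⟨-, -, -, -, hcontent, -⟩ := hT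
  rw [← (hcontent m).2]
  congr 1
  ext c
  refine ⟨fun hc => ⟨hc.1, hc.2.1⟩, fun hc => ⟨hc.1, hc.2, ?_⟩⟩
  by_contra hrow
  have := hc.1.2
  rw [hν c.1 (by omega)] at this
  omega

lemma lt_of_snd_eq (hT : IsLRFilling lam mu ν T) (hν : Antitone ν) (hlam : Antitone lam)
    {c c' : ℕ × ℕ} (hc : InSkew ν lam c) (hc' : InSkew ν lam c') (hcol : c.2 = c'.2)
    (hrow : c.1 < c'.1) : T c < T c' := by
  obtain ⟨i, j⟩ := c
  obtain ⟨i', j'⟩ := c'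
  obtain rfl : j = j' := hcol
  obtain ⟨-, -, -, hcol_strict, -⟩ := hT
  induction i', hrow using Nat.le_induction with
  | base => exact hcol_strict i j hc hc'
  | succ i' hi ih =>
    have hmid := InSkew.of_le_of_le hν hlam (Nat.le_of_succ_le hi) i'.le_succ hc hc'
    exact (ih hmid).trans (hcol_strict i' j hmid hc')

lemma injOn_snd_cellsLabeled (hT : IsLRFilling lam mu ν T) (hν : Antitone ν)
    (hlam : Antitone lam) (m i : ℕ) : Set.InjOn Prod.snd (cellsLabeled ν lam T m i) := by
  intro c hc c' hc' hcol
  have hT_eq : T c = T c' := hc.2.1.trans hc'.2.1.symm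
  rcases lt_trichotomy c.1 c'.1 with h | h | h
  · exact absurd hT_eq (hT.lt_of_snd_eq hν hlam hc.1 hc'.1 hcol h).ne
  · exact Prod.ext h hcol
  · exact absurd hT_eq (hT.lt_of_snd_eq hν hlam hc'.1 hc.1 hcol.symm h).ne'

lemma ncard_cellsLabeled_le_sub {l k : ℕ} (hT : IsLRFilling lam mu ν T)
    (hν : InRect ν l k) (hlam : Antitone lam) (m i : ℕ) :
    (cellsLabeled ν lam T m i).ncard ≤ k - lam i := by
  calc (cellsLabeled ν lam T m i).ncard
      ≤ (Finset.Ico (lam i) k : Set ℕ).ncard := by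
        refine Set.ncard_le_ncard_of_injOn Prod.snd (fun c hc => ?_)
          (hT.injOn_snd_cellsLabeled hν.1.antitone hlam m i)
        simp only [Finset.coe_Ico, Set.mem_Ico]
        exact ⟨(hlam hc.2.2).trans hc.1.1, hc.1.2.trans_le (hν.apply_le c.1)⟩
    _ = k - lam i := by rw [Set.ncard_coe_finset, Nat.card_Ico]

lemma fst_lt_of_readBefore (hT : IsLRFilling lam mu ν T) {m : ℕ} {c c' : ℕ × ℕ}
    (hc : InSkew ν lam c) (hTc : T c = m + 2) (hc' : InSkew ν lam c')
    (hTc' : T c' = m + 1) (hread : ReadBefore c' c ∨ c' = c) : c'.1 < c.1 := by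
  rcases hread with (h | ⟨hrow, hcol⟩) | rfl
  · exact h
  · obtain ⟨i, j⟩ := c
    obtain ⟨i', j'⟩ := c'
    obtain rfl : i' = i := hrow
    obtain ⟨-, -, hrow_mono, -⟩ := hT
    have := hrow_mono i' j j' hc hc' hcol.le
    omega
  · omega

lemma ncard_cellsLabeled_succ_le (hT : IsLRFilling lam mu ν T) (m i : ℕ) :
    (cellsLabeled ν lam T (m + 1) (i + 1)).ncard ≤ (cellsLabeled ν lam T m i).ncard := by
  obtain ⟨-, -, -, -, hcontent, hballot⟩ := id hT
  rcases (cellsLabeled ν lam T (m + 1) (i + 1)).eq_empty_or_nonempty with he | hne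
  · simp [he]
  obtain ⟨c, hc, hlast⟩ :=
    exists_readBefore_or_eq_of_finite (hT.finite_cellsLabeled (m + 1) (i + 1)) hne
  calc (cellsLabeled ν lam T (m + 1) (i + 1)).ncard
      ≤ {c' | InSkew ν lam c' ∧ (ReadBefore c' c ∨ c' = c) ∧ T c' = m + 1 + 1}.ncard :=
        Set.ncard_le_ncard (fun c' hc' => ⟨hc'.1, hlast c' hc', hc'.2.1⟩)
          ((hcontent (m + 1)).1.subset fun _ hx => ⟨hx.1, hx.2.2⟩)
    _ ≤ {c' | InSkew ν lam c' ∧ (ReadBefore c' c ∨ c' = c) ∧ T c' = m + 1}.ncard :=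
        hballot c hc.1 (m + 1) (Nat.le_add_left 1 m)
    _ ≤ (cellsLabeled ν lam T m i).ncard := by
        refine Set.ncard_le_ncard (fun c' hc' => ⟨hc'.1, hc'.2.2, ?_⟩)
          (hT.finite_cellsLabeled m i)
        have := hT.fst_lt_of_readBefore hc.1 hc.2.1 hc'.1 hc'.2.2 hc'.2.1
        have := hc.2.2
        omega

lemma ncard_cellsLabeled_le_ncard_cellsLabeled_zero (hT : IsLRFilling lam mu ν T)
    (t i : ℕ) : (cellsLabeled ν lam T t (i + t)).ncard ≤ (cellsLabeled ν lam T 0 i).ncard := by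
  induction t with
  | zero => rfl
  | succ t ih => exact (hT.ncard_cellsLabeled_succ_le t (i + t)).trans ih

theorem add_le_of_inRect {l k : ℕ} (hT : IsLRFilling lam mu ν T) (hlam : InRect lam l k)
    (hν : InRect ν l k) {a : ℕ} (ha : a < l) : lam a + mu (l - 1 - a) ≤ k := by
  have hcount := hT.ncard_cellsLabeled_le_ncard_cellsLabeled_zero (l - 1 - a) a
  rw [show a + (l - 1 - a) = l - 1 by omega, hT.ncard_cellsLabeled_of_rows_lt hν.2.2] at hcount
  have := hT.ncard_cellsLabeled_le_sub hν hlam.1.antitone 0 a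
  have := hlam.apply_le a
  omega

end IsLRFilling

theorem stmt0_general (lam mu : ℕ → ℕ) (l k : ℕ)
    (hlam : InRect lam l k)
    (hint : ∃ c : ℕ × ℕ, c.1 < l ∧ c.2 < k ∧ InLam lam c ∧ InRot mu l k c) :
    ∀ ν : ℕ → ℕ, InRect ν l k → lrCoeff lam mu ν = 0 := by
  intro ν hν
  obtain ⟨⟨a, j⟩, ha, -, hInLam, hInRot⟩ := hint
  have hk : k < lam a + mu (l - 1 - a) := by
    simp only [InLam, InRot] at hInLam hInRot
    omega
  rw [lrCoeff, Nat.card_eq_zero]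
  exact Or.inl ⟨fun ⟨_, hT⟩ => absurd (hT.add_le_of_inRect hlam hν ha) (not_le.mpr hk)⟩

/-- If the placements of `λ` (top-left) and `rotate(μ)` (bottom-right) in `l × k`
intersect, then all LR coefficients `c^ν_{λ,μ}` with `ν ⊆ l × k` vanish. -/
theorem stmt0 (lam mu : ℕ → ℕ) (l k : ℕ)
    (hlam : InRect lam l k) (hmu : InRect mu l k)
    (hint : ∃ c : ℕ × ℕ, c.1 < l ∧ c.2 < k ∧ InLam lam c ∧ InRot mu l k c) :
    ∀ ν : ℕ → ℕ, InRect ν l k → lrCoeff lam mu ν = 0 :=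
  stmt0_general lam mu l k hlam hint
end

section
/- (Monotonicity under adding a row.) Let λ̄, μ, ν be partitions and r ≥ 0 an integer such that λ = λ̄ ∪ (r) and ν ∪ (r) are partitions (i.e., r fits as an additional part). Then c^{ν∪(r)}_{λ̄∪(r), μ} ≥ c^ν_{λ̄, μ}. -/
/-- Insert a part of size `r` into the partition `f` in sorted order. -/
noncomputable def insertPart (r : ℕ) (f : ℕ → ℕ) : ℕ → ℕ := fun i =>
  if i < {j | r < f j}.ncard then f i
  else if i = {j | r < f j}.ncard then r
  else f (i - 1)


/-!
Inserting a part `r` into `λ̄` and into `ν` lengthens each of the first `r` columns of both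
by one box, so `(ν ∪ (r)) / (λ̄ ∪ (r))` is `ν / λ̄` with its first `r` columns moved one row
down. Moving the entries of a Littlewood–Richardson filling along with their cells keeps it
semistandard with the same content, so it only remains to check the ballot condition, which we
do row by row. The only new threat is an entry `m` in a moved column of row `i - 1` that now
sits in row `i`; but if row `i` also has an entry `m + 1` in an unmoved column, every such `m`
has an `m + 1` directly below it, which compensates. This injects the LR fillings of `ν / λ̄`
into those of the new shape.
-/

theorem Set.ncard_and_le_ncard_and {α : Type*} {S P Q : α → Prop} (hS : {x | S x}.Finite)
    (h : ∀ x, S x → P x → Q x) : {x | S x ∧ P x}.ncard ≤ {x | S x ∧ Q x}.ncard :=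
  Set.ncard_le_ncard (fun x hx => ⟨hx.1, h x hx.1 hx.2⟩) (hS.subset fun _ hx => hx.1)

theorem Set.ncard_and_eq_add {α : Type*} {S P Q R : α → Prop} (hS : {x | S x}.Finite)
    (h : ∀ x, S x → (P x ↔ Q x ∨ R x)) (hQR : ∀ x, Q x → ¬ R x) :
    {x | S x ∧ P x}.ncard = {x | S x ∧ Q x}.ncard + {x | S x ∧ R x}.ncard := by
  rw [← Set.ncard_union_eq (Set.disjoint_left.mpr fun x hQ hR => hQR x hQ.2 hR.2)
    (hS.subset fun _ hx => hx.1) (hS.subset fun _ hx => hx.1)]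
  congr 1
  ext x
  simp only [Set.mem_ofPred_eq, Set.mem_union]
  constructor
  · rintro ⟨hx, hP⟩
    exact ((h x hx).mp hP).imp (⟨hx, ·⟩) (⟨hx, ·⟩)
  · rintro (⟨hx, hQ⟩ | ⟨hx, hR⟩)
    exacts [⟨hx, (h x hx).mpr (Or.inl hQ)⟩, ⟨hx, (h x hx).mpr (Or.inr hR)⟩]

theorem IsPartition.setOf_lt_eq_Iio {f : ℕ → ℕ} (hf : IsPartition f) (r : ℕ) :
    {i | r < f i} = Set.Iio {i | r < f i}.ncard := by
  have hlower : IsLowerSet {i | r < f i} := fun a b hba ha => ha.trans_le (hf.1 b a hba)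
  obtain ⟨N, hN⟩ := hf.2
  rcases hlower.eq_univ_or_Iio with huniv | ⟨a, ha⟩
  · have hN' : N ∈ {i | r < f i} := huniv ▸ Set.mem_univ N
    simp [hN N le_rfl] at hN'
  · rw [ha, Set.ncard_Iio_nat]

theorem IsPartition.lt_iff_lt_ncard {f : ℕ → ℕ} (hf : IsPartition f) {r i : ℕ} :
    r < f i ↔ i < {j | r < f j}.ncard :=
  Set.ext_iff.mp (hf.setOf_lt_eq_Iio r) i

theorem IsPartition.finite_inSkew {ν : ℕ → ℕ} (hν : IsPartition ν) (lam : ℕ → ℕ) :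
    {c | InSkew ν lam c}.Finite := by
  obtain ⟨N, hN⟩ := hν.2
  refine ((Set.finite_Iio N).prod (Set.finite_Iio (ν 0))).subset ?_
  rintro ⟨i, j⟩ ⟨-, hj⟩
  refine ⟨?_, hj.trans_le (hν.1 0 i i.zero_le)⟩
  by_contra hi
  rw [hN i (not_lt.mp hi)] at hj
  exact Nat.not_lt_zero j hj

section InsertPart

variable {f : ℕ → ℕ} {r i j : ℕ}

theorem lt_insertPart_iff_of_le (hf : IsPartition f) (hj : r ≤ j) :
    j < insertPart r f i ↔ j < f i := by
  have hk := fun i => hf.lt_iff_lt_ncard (r := r) (i := i)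
  unfold insertPart
  split_ifs with h₁ h₂
  · rfl
  · have := hk i; omega
  · have := hk i; have := hk (i - 1); omega

theorem lt_insertPart_succ_iff_of_lt (hf : IsPartition f) (hj : j < r) :
    j < insertPart r f (i + 1) ↔ j < f i := by
  have hk := fun i => hf.lt_iff_lt_ncard (r := r) (i := i)
  unfold insertPart
  split_ifs with h₁ h₂
  · have := hk i; have := hk (i + 1); omega
  · have := hk i; omega
  · rfl

theorem lt_insertPart_zero_of_lt (hf : IsPartition f) (hj : j < r) : j < insertPart r f 0 := by
  have := hf.lt_iff_lt_ncard (r := r) (i := 0)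
  unfold insertPart
  split_ifs <;> omega

end InsertPart

section Shape

variable {lam ν : ℕ → ℕ} {r : ℕ}

theorem inSkew_insertPart_of_le (hlam : IsPartition lam) (hν : IsPartition ν) {i j : ℕ}
    (hj : r ≤ j) : InSkew (insertPart r ν) (insertPart r lam) (i, j) ↔ InSkew ν lam (i, j) := by
  simp only [InSkew, ← not_lt, lt_insertPart_iff_of_le hlam hj, lt_insertPart_iff_of_le hν hj]

theorem inSkew_insertPart_succ_of_lt (hlam : IsPartition lam) (hν : IsPartition ν) {a j : ℕ}
    (hj : j < r) :
    InSkew (insertPart r ν) (insertPart r lam) (a + 1, j) ↔ InSkew ν lam (a, j) := by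
  simp only [InSkew, ← not_lt, lt_insertPart_succ_iff_of_lt hlam hj,
    lt_insertPart_succ_iff_of_lt hν hj]

theorem not_inSkew_insertPart_zero (hlam : IsPartition lam) {j : ℕ} (hj : j < r) :
    ¬ InSkew (insertPart r ν) (insertPart r lam) (0, j) :=
  fun h => (lt_insertPart_zero_of_lt hlam hj).not_ge h.1

end Shape

def shiftCell (r : ℕ) (c : ℕ × ℕ) : ℕ × ℕ := if c.2 < r then (c.1 + 1, c.2) else c

def shiftFilling (r : ℕ) (T : ℕ × ℕ → ℕ) (c : ℕ × ℕ) : ℕ :=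
  if c.2 < r then (if c.1 = 0 then 0 else T (c.1 - 1, c.2)) else T c

section Shift

variable {r : ℕ}

theorem shiftCell_of_lt {a j : ℕ} (hj : j < r) : shiftCell r (a, j) = (a + 1, j) := by
  simp [shiftCell, hj]

theorem shiftCell_of_le {i j : ℕ} (hj : r ≤ j) : shiftCell r (i, j) = (i, j) := by
  simp [shiftCell, not_lt.mpr hj]

theorem shiftCell_fst (c : ℕ × ℕ) : (shiftCell r c).1 = if c.2 < r then c.1 + 1 else c.1 := by
  unfold shiftCell; split_ifs <;> rfl

theorem shiftCell_injective (r : ℕ) : Function.Injective (shiftCell r) := by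
  rintro ⟨a, b⟩ ⟨a', b'⟩ h
  unfold shiftCell at h
  split_ifs at h <;> simp only [Prod.mk.injEq] at h ⊢ <;> omega

theorem shiftFilling_zero_of_lt (T : ℕ × ℕ → ℕ) {j : ℕ} (hj : j < r) :
    shiftFilling r T (0, j) = 0 := by
  simp [shiftFilling, hj]

theorem shiftFilling_succ_of_lt (T : ℕ × ℕ → ℕ) {a j : ℕ} (hj : j < r) :
    shiftFilling r T (a + 1, j) = T (a, j) := by
  simp [shiftFilling, hj]

theorem shiftFilling_of_le (T : ℕ × ℕ → ℕ) {i j : ℕ} (hj : r ≤ j) :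
    shiftFilling r T (i, j) = T (i, j) := by
  simp [shiftFilling, not_lt.mpr hj]

theorem shiftFilling_shiftCell (T : ℕ × ℕ → ℕ) (d : ℕ × ℕ) :
    shiftFilling r T (shiftCell r d) = T d := by
  obtain ⟨a, j⟩ := d
  rcases lt_or_ge j r with hj | hj
  · rw [shiftCell_of_lt hj, shiftFilling_succ_of_lt T hj]
  · rw [shiftCell_of_le hj, shiftFilling_of_le T hj]

theorem shiftFilling_injective (r : ℕ) : Function.Injective (shiftFilling r) := by
  intro T T' h
  funext d
  rw [← shiftFilling_shiftCell T d, ← shiftFilling_shiftCell T' d, h]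

variable {lam ν : ℕ → ℕ}

theorem setOf_inSkew_insertPart (hlam : IsPartition lam) (hν : IsPartition ν) :
    {c | InSkew (insertPart r ν) (insertPart r lam) c} = shiftCell r '' {d | InSkew ν lam d} := by
  ext ⟨i, j⟩
  simp only [Set.mem_ofPred_eq, Set.mem_image]
  constructor
  · intro hc
    rcases lt_or_ge j r with hj | hj
    · cases i with
      | zero => exact absurd hc (not_inSkew_insertPart_zero hlam hj)
      | succ a =>
        exact ⟨(a, j), (inSkew_insertPart_succ_of_lt hlam hν hj).mp hc, shiftCell_of_lt hj⟩
    · exact ⟨(i, j), (inSkew_insertPart_of_le hlam hν hj).mp hc, shiftCell_of_le hj⟩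
  · rintro ⟨⟨a, b⟩, hd, hab⟩
    rw [← hab]
    rcases lt_or_ge b r with hb | hb
    · rw [shiftCell_of_lt hb]; exact (inSkew_insertPart_succ_of_lt hlam hν hb).mpr hd
    · rw [shiftCell_of_le hb]; exact (inSkew_insertPart_of_le hlam hν hb).mpr hd

theorem ncard_inSkew_insertPart (hlam : IsPartition lam) (hν : IsPartition ν)
    (T : ℕ × ℕ → ℕ) (Q : ℕ × ℕ → ℕ → Prop) :
    {c | InSkew (insertPart r ν) (insertPart r lam) c ∧ Q c (shiftFilling r T c)}.ncard =
      {d | InSkew ν lam d ∧ Q (shiftCell r d) (T d)}.ncard := by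
  have h : {c | InSkew (insertPart r ν) (insertPart r lam) c ∧ Q c (shiftFilling r T c)} =
      shiftCell r '' {d | InSkew ν lam d ∧ Q (shiftCell r d) (T d)} := by
    ext c
    have hc := Set.ext_iff.mp (setOf_inSkew_insertPart (r := r) hlam hν) c
    simp only [Set.mem_ofPred_eq, Set.mem_image] at hc ⊢
    constructor
    · rintro ⟨hsk, hQ⟩
      obtain ⟨d, hd, rfl⟩ := hc.mp hsk
      exact ⟨d, ⟨hd, by rwa [shiftFilling_shiftCell] at hQ⟩, rfl⟩
    · rintro ⟨d, ⟨hd, hQ⟩, rfl⟩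
      exact ⟨hc.mpr ⟨d, hd, rfl⟩, by rwa [shiftFilling_shiftCell]⟩
  rw [h, Set.ncard_image_of_injective _ (shiftCell_injective r)]

theorem finite_inSkew_insertPart (hlam : IsPartition lam) (hν : IsPartition ν) :
    {c | InSkew (insertPart r ν) (insertPart r lam) c}.Finite := by
  rw [setOf_inSkew_insertPart hlam hν]
  exact (hν.finite_inSkew lam).image _

end Shift

def RowBallot (lam ν : ℕ → ℕ) (T : ℕ × ℕ → ℕ) : Prop :=
  ∀ i m, 1 ≤ m → {c | InSkew ν lam c ∧ c.1 ≤ i ∧ T c = m + 1}.ncard ≤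
    {c | InSkew ν lam c ∧ c.1 < i ∧ T c = m}.ncard

section LRFilling

variable {lam mu ν : ℕ → ℕ} {T : ℕ × ℕ → ℕ}

theorem IsLRFilling.le_succ_row (hν : IsPartition ν) (hT : IsLRFilling lam mu ν T) {a j j' : ℕ}
    (hc : InSkew ν lam (a, j)) (hc' : InSkew ν lam (a + 1, j')) (hjj' : j ≤ j') :
    T (a, j) ≤ T (a + 1, j') := by
  have hmid : InSkew ν lam (a, j') :=
    ⟨hc.1.trans hjj', hc'.2.trans_le (hν.1 a (a + 1) a.le_succ)⟩
  exact (hT.2.2.1 a j j' hc hmid hjj').trans (hT.2.2.2.1 a j' hmid hc').le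

theorem IsLRFilling.rowBallot (hν : IsPartition ν) (hT : IsLRFilling lam mu ν T) :
    RowBallot lam ν T := by
  intro i m hm
  have hS := hν.finite_inSkew lam
  set A := {c | InSkew ν lam c ∧ c.1 ≤ i ∧ T c = m + 1}
  have hA : A.Finite := hS.subset fun c hc => hc.1
  rcases A.eq_empty_or_nonempty with hempty | hne
  · simp [hempty]
  -- `c` is the last cell of `A` in reading order: in the lowest row, leftmost there
  obtain ⟨c₀, hc₀, hlow⟩ := Set.exists_max_image A Prod.fst hA hne
  obtain ⟨c, ⟨hcA, hcrow⟩, hleft⟩ :=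
    Set.exists_min_image {c ∈ A | c.1 = c₀.1} Prod.snd (hA.subset fun _ h => h.1) ⟨c₀, hc₀, rfl⟩
  have hsub₁ : A ⊆ {d | InSkew ν lam d ∧ (ReadBefore d c ∨ d = c) ∧ T d = m + 1} := by
    rintro d hd
    refine ⟨hd.1, ?_, hd.2.2⟩
    have hd₁ : d.1 ≤ c.1 := hcrow ▸ hlow d hd
    rcases hd₁.lt_or_eq with hd₁ | hd₁
    · exact Or.inl (Or.inl hd₁)
    · have hd₂ : c.2 ≤ d.2 := hleft d ⟨hd, hd₁.trans hcrow⟩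
      rcases hd₂.lt_or_eq with hd₂ | hd₂
      · exact Or.inl (Or.inr ⟨hd₁, hd₂⟩)
      · exact Or.inr (Prod.ext hd₁ hd₂.symm)
  -- entries `m` read before `c` in its own row lie to its right, hence are `≥ T c = m + 1`
  have hsub₂ : {d | InSkew ν lam d ∧ (ReadBefore d c ∨ d = c) ∧ T d = m} ⊆
      {d | InSkew ν lam d ∧ d.1 < i ∧ T d = m} := by
    rintro ⟨a, b⟩ ⟨hd, (hbefore | ⟨rfl, hb⟩) | rfl, hTd⟩
    · exact ⟨hd, hbefore.trans_le hcA.2.1, hTd⟩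
    · have : T (c.1, c.2) = m + 1 := hcA.2.2
      have := hT.2.2.1 c.1 c.2 b hcA.1 hd hb.le
      omega
    · have := hcA.2.2
      omega
  calc A.ncard
      ≤ {d | InSkew ν lam d ∧ (ReadBefore d c ∨ d = c) ∧ T d = m + 1}.ncard :=
        Set.ncard_le_ncard hsub₁ (hS.subset fun _ h => h.1)
    _ ≤ {d | InSkew ν lam d ∧ (ReadBefore d c ∨ d = c) ∧ T d = m}.ncard :=
        hT.2.2.2.2.2 c hcA.1 m hm
    _ ≤ _ := Set.ncard_le_ncard hsub₂ (hS.subset fun _ h => h.1)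

theorem RowBallot.ballot (hS : {c | InSkew ν lam c}.Finite) (h : RowBallot lam ν T) :
    ∀ c, InSkew ν lam c → ∀ m, 1 ≤ m →
      {c' | InSkew ν lam c' ∧ (ReadBefore c' c ∨ c' = c) ∧ T c' = m + 1}.ncard ≤
      {c' | InSkew ν lam c' ∧ (ReadBefore c' c ∨ c' = c) ∧ T c' = m}.ncard := by
  intro c _ m hm
  calc _ ≤ {d | InSkew ν lam d ∧ d.1 ≤ c.1 ∧ T d = m + 1}.ncard := by
        refine Set.ncard_and_le_ncard_and hS fun d _ ⟨hd, hv⟩ => ⟨?_, hv⟩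
        rcases hd with (hd | ⟨hd, -⟩) | rfl
        exacts [hd.le, hd.le, le_rfl]
    _ ≤ {d | InSkew ν lam d ∧ d.1 < c.1 ∧ T d = m}.ncard := h c.1 m hm
    _ ≤ _ := Set.ncard_and_le_ncard_and hS fun d _ ⟨hd, hv⟩ => ⟨Or.inl (Or.inl hd), hv⟩

end LRFilling

section Shifted

variable {lam mu ν : ℕ → ℕ} {T : ℕ × ℕ → ℕ} {r : ℕ}

-- An entry `m` in row `i - 1` and column `j < r` has an entry `m + 1` right below it,
-- squeezed between it and the entry `m + 1` at `(i, b)`.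
theorem IsLRFilling.ncard_prev_row_le (hlam : IsPartition lam) (hν : IsPartition ν)
    (hT : IsLRFilling lam mu ν T) {i b m : ℕ} (hb : r ≤ b) (hib : InSkew ν lam (i, b))
    (hTb : T (i, b) = m + 1) :
    {d | InSkew ν lam d ∧ d.1 + 1 = i ∧ d.2 < r ∧ T d = m}.ncard ≤
      {d | InSkew ν lam d ∧ d.1 = i ∧ d.2 < r ∧ T d = m + 1}.ncard := by
  refine Set.ncard_le_ncard_of_injOn (fun d => (d.1 + 1, d.2)) ?_
    (fun d _ d' _ h => by simpa [Prod.ext_iff] using h)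
    ((hν.finite_inSkew lam).subset fun _ h => h.1)
  rintro ⟨a, j⟩ ⟨hd, rfl, hj, hTd⟩
  have hd' : InSkew ν lam (a + 1, j) :=
    ⟨(hlam.1 a (a + 1) a.le_succ).trans hd.1, (hj.trans_le hb).trans hib.2⟩
  have hcol := hT.2.2.2.1 a j hd hd'
  have hrow := hT.2.2.1 (a + 1) j b hd' hib (hj.le.trans hb)
  have hTb' : T (a + 1, b) = m + 1 := hTb
  exact ⟨hd', rfl, hj, show T (a + 1, j) = m + 1 by omega⟩

/-- The row-wise ballot inequality for the shifted filling, in terms of the original cells. -/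
theorem IsLRFilling.ncard_shiftCell_le (hlam : IsPartition lam) (hν : IsPartition ν)
    (hT : IsLRFilling lam mu ν T)
    {m : ℕ} (hm : 1 ≤ m) (i : ℕ) :
    {d | InSkew ν lam d ∧ (shiftCell r d).1 ≤ i ∧ T d = m + 1}.ncard ≤
      {d | InSkew ν lam d ∧ (shiftCell r d).1 < i ∧ T d = m}.ncard := by
  have hS := hν.finite_inSkew lam
  have hrows := hT.rowBallot hν
  have hL := Set.ncard_and_eq_add hS (P := fun d => d.1 ≤ i ∧ T d = m + 1)
    (Q := fun d => (shiftCell r d).1 ≤ i ∧ T d = m + 1)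
    (R := fun d => d.1 = i ∧ d.2 < r ∧ T d = m + 1)
    (fun d _ => by rw [shiftCell_fst]; split_ifs <;> omega)
    (fun d => by rw [shiftCell_fst]; split_ifs <;> omega)
  have hR := Set.ncard_and_eq_add hS (P := fun d => d.1 < i ∧ T d = m)
    (Q := fun d => (shiftCell r d).1 < i ∧ T d = m)
    (R := fun d => d.1 + 1 = i ∧ d.2 < r ∧ T d = m)
    (fun d _ => by rw [shiftCell_fst]; split_ifs <;> omega)
    (fun d => by rw [shiftCell_fst]; split_ifs <;> omega)
  by_cases hx : ∃ b, r ≤ b ∧ InSkew ν lam (i, b) ∧ T (i, b) = m + 1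
  · obtain ⟨b, hb, hib, hTb⟩ := hx
    have hdown := hT.ncard_prev_row_le hlam hν hb hib hTb
    have := hrows i m hm
    omega
  -- otherwise every cell counted on the left lies in a row `< i`
  · push Not at hx
    cases i with
    | zero =>
      refine Set.ncard_and_le_ncard_and hS fun ⟨a, b⟩ hd ⟨hdi, hTd⟩ => ?_
      rw [shiftCell_fst] at hdi
      split_ifs at hdi with hbr
      · omega
      · obtain rfl : a = 0 := by omega
        exact absurd hTd (hx b (not_lt.mp hbr) hd)
    | succ k =>
      calc _ ≤ {d | InSkew ν lam d ∧ d.1 ≤ k ∧ T d = m + 1}.ncard := by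
            refine Set.ncard_and_le_ncard_and hS fun d hd ⟨hdi, hTd⟩ => ⟨?_, hTd⟩
            rw [shiftCell_fst] at hdi
            split_ifs at hdi with hdr
            · omega
            · by_contra hdk
              obtain ⟨a, b⟩ := d
              obtain rfl : a = k + 1 := by simp only at hdi hdk; omega
              exact hx b (not_lt.mp hdr) hd hTd
        _ ≤ {d | InSkew ν lam d ∧ d.1 < k ∧ T d = m}.ncard := hrows k m hm
        _ ≤ _ := Set.ncard_and_le_ncard_and hS fun d _ ⟨hdk, hTd⟩ =>
            ⟨by rw [shiftCell_fst]; split_ifs <;> omega, hTd⟩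

theorem IsLRFilling.shiftFilling_row (hlam : IsPartition lam) (hν : IsPartition ν)
    (hT : IsLRFilling lam mu ν T) (i j j' : ℕ)
    (hc : InSkew (insertPart r ν) (insertPart r lam) (i, j))
    (hc' : InSkew (insertPart r ν) (insertPart r lam) (i, j')) (hjj' : j ≤ j') :
    shiftFilling r T (i, j) ≤ shiftFilling r T (i, j') := by
  rcases lt_or_ge j r with hj | hj
  · cases i with
    | zero => exact absurd hc (not_inSkew_insertPart_zero hlam hj)
    | succ a =>
      rw [inSkew_insertPart_succ_of_lt hlam hν hj] at hc
      rw [shiftFilling_succ_of_lt T hj]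
      rcases lt_or_ge j' r with hj' | hj'
      · rw [inSkew_insertPart_succ_of_lt hlam hν hj'] at hc'
        rw [shiftFilling_succ_of_lt T hj']
        exact hT.2.2.1 a j j' hc hc' hjj'
      · rw [inSkew_insertPart_of_le hlam hν hj'] at hc'
        rw [shiftFilling_of_le T hj']
        exact hT.le_succ_row hν hc hc' hjj'
  · have hj' := hj.trans hjj'
    rw [inSkew_insertPart_of_le hlam hν hj] at hc
    rw [inSkew_insertPart_of_le hlam hν hj'] at hc'
    rw [shiftFilling_of_le T hj, shiftFilling_of_le T hj']
    exact hT.2.2.1 i j j' hc hc' hjj'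

theorem IsLRFilling.shiftFilling_col (hlam : IsPartition lam) (hν : IsPartition ν)
    (hT : IsLRFilling lam mu ν T) (i j : ℕ)
    (hc : InSkew (insertPart r ν) (insertPart r lam) (i, j))
    (hc' : InSkew (insertPart r ν) (insertPart r lam) (i + 1, j)) :
    shiftFilling r T (i, j) < shiftFilling r T (i + 1, j) := by
  rcases lt_or_ge j r with hj | hj
  · cases i with
    | zero => exact absurd hc (not_inSkew_insertPart_zero hlam hj)
    | succ a =>
      rw [inSkew_insertPart_succ_of_lt hlam hν hj] at hc hc'
      rw [shiftFilling_succ_of_lt T hj, shiftFilling_succ_of_lt T hj]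
      exact hT.2.2.2.1 a j hc hc'
  · rw [inSkew_insertPart_of_le hlam hν hj] at hc hc'
    rw [shiftFilling_of_le T hj, shiftFilling_of_le T hj]
    exact hT.2.2.2.1 i j hc hc'

theorem IsLRFilling.shiftFilling (hlam : IsPartition lam) (hν : IsPartition ν)
    (hT : IsLRFilling lam mu ν T) :
    IsLRFilling (insertPart r lam) mu (insertPart r ν) (shiftFilling r T) := by
  have hS' := finite_inSkew_insertPart (r := r) hlam hν
  refine ⟨?_, ?_, hT.shiftFilling_row hlam hν, hT.shiftFilling_col hlam hν, fun m => ?_, ?_⟩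
  · rintro ⟨i, j⟩ hc
    rcases lt_or_ge j r with hj | hj
    · cases i with
      | zero => exact shiftFilling_zero_of_lt T hj
      | succ a =>
        rw [inSkew_insertPart_succ_of_lt hlam hν hj] at hc
        rw [shiftFilling_succ_of_lt T hj]
        exact hT.1 _ hc
    · rw [inSkew_insertPart_of_le hlam hν hj] at hc
      rw [shiftFilling_of_le T hj]
      exact hT.1 _ hc
  · intro c hc
    obtain ⟨d, hd, rfl⟩ : c ∈ shiftCell r '' {d | InSkew ν lam d} :=
      setOf_inSkew_insertPart hlam hν ▸ hc
    rw [shiftFilling_shiftCell]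
    exact hT.2.1 d hd
  · refine ⟨hS'.subset fun _ h => h.1, ?_⟩
    rw [← (hT.2.2.2.2.1 m).2]
    exact ncard_inSkew_insertPart hlam hν T fun _ v => v = m + 1
  · refine RowBallot.ballot hS' fun i m hm => ?_
    rw [ncard_inSkew_insertPart hlam hν T fun c v => c.1 ≤ i ∧ v = m + 1,
      ncard_inSkew_insertPart hlam hν T fun c v => c.1 < i ∧ v = m]
    exact hT.ncard_shiftCell_le hlam hν hm i

end Shifted

theorem finite_lrFillings {lam mu ν : ℕ → ℕ} (hmu : IsPartition mu)
    (hS : {c | InSkew ν lam c}.Finite) : Finite {T // IsLRFilling lam mu ν T} := by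
  obtain ⟨N, hN⟩ := hmu.2
  have : Finite {c // InSkew ν lam c} := hS.to_subtype
  -- an entry `m + 1` occurs `mu m` times, so entries are at most `N`
  have hbound : ∀ T, IsLRFilling lam mu ν T → ∀ c, T c < N + 1 := by
    intro T hT c
    by_contra! h
    obtain ⟨m, hm⟩ : ∃ m, T c = m + 1 := Nat.exists_eq_succ_of_ne_zero (by omega)
    have hc : InSkew ν lam c := by_contra fun hc => by have := hT.1 c hc; omega
    have hpos := (Set.ncard_pos (hT.2.2.2.2.1 m).1).mpr ⟨c, hc, hm⟩
    rw [(hT.2.2.2.2.1 m).2, hN m (by omega)] at hpos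
    exact hpos.false
  refine Finite.of_injective
    (fun T (c : {c // InSkew ν lam c}) => (⟨T.1 c, hbound T.1 T.2 c⟩ : Fin (N + 1)))
    fun T T' h => Subtype.ext (funext fun c => ?_)
  by_cases hc : InSkew ν lam c
  · exact congrArg Fin.val (congrFun h ⟨c, hc⟩)
  · rw [T.2.1 c hc, T'.2.1 c hc]

theorem stmt5_general (lamb mu ν : ℕ → ℕ) (r : ℕ)
    (hlamb : IsPartition lamb) (hmu : IsPartition mu) (hν : IsPartition ν) :
    lrCoeff lamb mu ν ≤ lrCoeff (insertPart r lamb) mu (insertPart r ν) := by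
  have : Finite {T // IsLRFilling (insertPart r lamb) mu (insertPart r ν) T} :=
    finite_lrFillings hmu (finite_inSkew_insertPart hlamb hν)
  exact Nat.card_le_card_of_injective (fun T => ⟨shiftFilling r T, T.2.shiftFilling hlamb hν⟩)
    fun T T' h => Subtype.ext (shiftFilling_injective r (congrArg Subtype.val h))

/-- Monotonicity of LR coefficients under adding a row:
`c^{ν ∪ (r)}_{λ̄ ∪ (r), μ} ≥ c^ν_{λ̄, μ}`. -/
theorem stmt5 (lamb mu ν : ℕ → ℕ) (r : ℕ)
    (hlamb : IsPartition lamb) (hmu : IsPartition mu) (hν : IsPartition ν)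
    (h1 : IsPartition (insertPart r lamb)) (h2 : IsPartition (insertPart r ν)) :
    lrCoeff lamb mu ν ≤ lrCoeff (insertPart r lamb) mu (insertPart r ν) :=
  stmt5_general lamb mu ν r hlamb hmu hν
end

section
/- If a Richardson quadruple (λ, μ, ℓ×k) is not basic, then its basic demolition (λ̃, μ̃, ℓ̃×k̃), obtained by removing all full columns and full rows of λ ∪ rotate(μ), is basic: λ̃ ∪ rotate(μ̃) contains no full column of length ℓ̃ and no full row of length k̃. -/
noncomputable section

/-- Rows of `l × k` that survive the basic demolition (not full). -/
def rowKeep (lam mu : ℕ → ℕ) (l k : ℕ) : ℕ → Prop :=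
  fun i => i < l ∧ ¬ FullRow lam mu l k i

/-- Columns of `l × k` that survive the basic demolition (not full). -/
def colKeep (lam mu : ℕ → ℕ) (l k : ℕ) : ℕ → Prop :=
  fun j => j < k ∧ ¬ FullCol lam mu l k j

/-- Number of rows of the demolished rectangle. -/
def demL (lam mu : ℕ → ℕ) (l k : ℕ) : ℕ := {i | rowKeep lam mu l k i}.ncard

/-- Number of columns of the demolished rectangle. -/
def demK (lam mu : ℕ → ℕ) (l k : ℕ) : ℕ := {j | colKeep lam mu l k j}.ncard

/-- The partition `λ̃` of the basic demolition: in the `i'`-th surviving row, count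
the surviving columns meeting `λ`. -/
def demLam (lam mu : ℕ → ℕ) (l k : ℕ) : ℕ → ℕ := fun i' =>
  if i' < demL lam mu l k then
    {j | colKeep lam mu l k j ∧ j < lam (Nat.nth (rowKeep lam mu l k) i')}.ncard
  else 0

/-- The partition `μ̃` of the basic demolition: its `p`-th part counts, in the
surviving row corresponding to `rotate(μ̃)`'s row, the surviving columns meeting
`rotate(μ)`. -/
def demMu (lam mu : ℕ → ℕ) (l k : ℕ) : ℕ → ℕ := fun p =>
  if p < demL lam mu l k then
    {j | colKeep lam mu l k j ∧
      k - mu (l - 1 - Nat.nth (rowKeep lam mu l k) (demL lam mu l k - 1 - p)) ≤ j}.ncard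
  else 0

/-
The box in the `i'`-th surviving row and `j'`-th surviving column of the demolished rectangle is
covered by `λ̃ ∪ rotate(μ̃)` exactly when the corresponding box of `ℓ × k` is covered by
`λ ∪ rotate(μ)`. A surviving column contains an uncovered box; the row of that box is then not full
either, so it survives, and the box persists in the demolished rectangle. Hence no column of the
demolition is full, and symmetrically no row.
-/

namespace Nat

lemma nth_mem_of_lt_ncard {p : ℕ → Prop} (hf : {j | p j}.Finite) {n : ℕ}
    (hn : n < {j | p j}.ncard) : p (nth p n) := by
  rw [Set.ncard_eq_toFinset_card _ hf] at hn
  exact nth_mem_of_lt_card hf hn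

variable {p : ℕ → Prop} [DecidablePred p]

lemma ncard_setOf_and_lt (m : ℕ) : {j | p j ∧ j < m}.ncard = count p m := by
  rw [count_eq_card_filter_range, ← Set.ncard_coe_finset]
  congr 1
  ext j
  simp [and_comm]

lemma ncard_setOf_and_le (hf : {j | p j}.Finite) (m : ℕ) :
    {j | p j ∧ m ≤ j}.ncard = {j | p j}.ncard - count p m := by
  have hdiff : {j | p j ∧ m ≤ j} = {j | p j} \ {j | p j ∧ j < m} := by
    ext j
    simp only [Set.mem_ofPred_eq, Set.mem_sdiff, not_and, not_lt]
    tauto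
  rw [hdiff, Set.ncard_sdiff' (fun _ hj => hj.1) hf, ncard_setOf_and_lt]

lemma lt_count_iff_nth_lt (hf : {j | p j}.Finite) {n m : ℕ} (hn : n < {j | p j}.ncard) :
    n < count p m ↔ nth p n < m := by
  rw [Set.ncard_eq_toFinset_card _ hf] at hn
  refine ⟨nth_lt_of_lt_count, fun h => ?_⟩
  rw [← count_nth_of_lt_card_finite hf hn]
  exact count_strict_mono (nth_mem_of_lt_card hf hn) h

lemma count_lt_ncard (hf : {j | p j}.Finite) {n : ℕ} (hn : p n) :
    count p n < {j | p j}.ncard := by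
  rw [Set.ncard_eq_toFinset_card _ hf]
  exact count_lt_card hf hn

end Nat

def Covered (lam mu : ℕ → ℕ) (l k : ℕ) (c : ℕ × ℕ) : Prop :=
  InLam lam c ∨ InRot mu l k c

section Demolition

variable {lam mu : ℕ → ℕ} {l k : ℕ}

lemma rowKeep_finite : {i | rowKeep lam mu l k i}.Finite :=
  (Set.finite_Iio l).subset fun _ hi => hi.1

lemma colKeep_finite : {j | colKeep lam mu l k j}.Finite :=
  (Set.finite_Iio k).subset fun _ hj => hj.1

lemma inLam_demLam_iff {i' j' : ℕ} (hi : i' < demL lam mu l k) (hj : j' < demK lam mu l k) :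
    InLam (demLam lam mu l k) (i', j') ↔
      InLam lam (Nat.nth (rowKeep lam mu l k) i', Nat.nth (colKeep lam mu l k) j') := by
  classical
  simp only [InLam, demLam, if_pos hi, Nat.ncard_setOf_and_lt]
  exact Nat.lt_count_iff_nth_lt colKeep_finite hj

lemma inRot_demMu_iff {i' j' : ℕ} (hi : i' < demL lam mu l k) (hj : j' < demK lam mu l k) :
    InRot (demMu lam mu l k) (demL lam mu l k) (demK lam mu l k) (i', j') ↔
      InRot mu l k (Nat.nth (rowKeep lam mu l k) i', Nat.nth (colKeep lam mu l k) j') := by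
  classical
  have hflip : demL lam mu l k - 1 - (demL lam mu l k - 1 - i') = i' := by omega
  simp only [InRot, demMu, if_pos (show demL lam mu l k - 1 - i' < demL lam mu l k by omega),
    hflip, Nat.ncard_setOf_and_le colKeep_finite]
  set m := k - mu (l - 1 - Nat.nth (rowKeep lam mu l k) i')
  -- `μ̃` counts the surviving columns `≥ m`, so `K̃ - μ̃` counts those `< m`.
  have hcount : Nat.count (colKeep lam mu l k) m ≤ demK lam mu l k := by
    rw [demK, Set.ncard_eq_toFinset_card _ colKeep_finite]
    exact Nat.count_le_card colKeep_finite m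
  rw [← demK, Nat.sub_sub_self hcount, ← not_lt, ← not_lt, not_iff_not]
  exact Nat.lt_count_iff_nth_lt colKeep_finite hj

lemma covered_demolition_iff {i' j' : ℕ} (hi : i' < demL lam mu l k)
    (hj : j' < demK lam mu l k) :
    Covered (demLam lam mu l k) (demMu lam mu l k) (demL lam mu l k) (demK lam mu l k) (i', j') ↔
      Covered lam mu l k (Nat.nth (rowKeep lam mu l k) i', Nat.nth (colKeep lam mu l k) j') :=
  or_congr (inLam_demLam_iff hi hj) (inRot_demMu_iff hi hj)

lemma exists_uncovered_of_colKeep {j : ℕ} (hj : colKeep lam mu l k j) :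
    ∃ i, rowKeep lam mu l k i ∧ ¬ Covered lam mu l k (i, j) := by
  obtain ⟨i, hil, hi⟩ : ∃ i < l, ¬ Covered lam mu l k (i, j) := by
    simpa [FullCol, Covered] using hj.2
  exact ⟨i, ⟨hil, fun hrow => hi (hrow j hj.1)⟩, hi⟩

lemma exists_uncovered_of_rowKeep {i : ℕ} (hi : rowKeep lam mu l k i) :
    ∃ j, colKeep lam mu l k j ∧ ¬ Covered lam mu l k (i, j) := by
  obtain ⟨j, hjk, hj⟩ : ∃ j < k, ¬ Covered lam mu l k (i, j) := by
    simpa [FullRow, Covered] using hi.2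
  exact ⟨j, ⟨hjk, fun hcol => hj (hcol i hi.1)⟩, hj⟩

lemma not_fullCol_demolition {j' : ℕ} (hj : j' < demK lam mu l k) :
    ¬ FullCol (demLam lam mu l k) (demMu lam mu l k) (demL lam mu l k) (demK lam mu l k) j' := by
  classical
  obtain ⟨i, hi, hunc⟩ :=
    exists_uncovered_of_colKeep (Nat.nth_mem_of_lt_ncard colKeep_finite hj)
  have hi' : Nat.count (rowKeep lam mu l k) i < demL lam mu l k :=
    Nat.count_lt_ncard rowKeep_finite hi
  intro hfull
  exact hunc (by simpa [Nat.nth_count hi] using (covered_demolition_iff hi' hj).1 (hfull _ hi'))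

lemma not_fullRow_demolition {i' : ℕ} (hi : i' < demL lam mu l k) :
    ¬ FullRow (demLam lam mu l k) (demMu lam mu l k) (demL lam mu l k) (demK lam mu l k) i' := by
  classical
  obtain ⟨j, hj, hunc⟩ :=
    exists_uncovered_of_rowKeep (Nat.nth_mem_of_lt_ncard rowKeep_finite hi)
  have hj' : Nat.count (colKeep lam mu l k) j < demK lam mu l k :=
    Nat.count_lt_ncard colKeep_finite hj
  intro hfull
  exact hunc (by simpa [Nat.nth_count hj] using (covered_demolition_iff hi hj').1 (hfull _ hj'))

end Demolition

theorem stmt6_general (lam mu : ℕ → ℕ) (l k : ℕ) :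
    (∀ j, j < demK lam mu l k →
      ¬ FullCol (demLam lam mu l k) (demMu lam mu l k) (demL lam mu l k) (demK lam mu l k) j) ∧
    (∀ i, i < demL lam mu l k →
      ¬ FullRow (demLam lam mu l k) (demMu lam mu l k) (demL lam mu l k) (demK lam mu l k) i) :=
  ⟨fun _ => not_fullCol_demolition, fun _ => not_fullRow_demolition⟩

/-- The basic demolition of a non-basic Richardson quadruple is basic: it has no
full column and no full row. -/
theorem stmt6 (lam mu : ℕ → ℕ) (l k : ℕ)
    (hlam : InRect lam l k) (hmu : InRect mu l k)
    (hdisj : DisjointPlace lam mu l k)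
    (hnotbasic : (∃ j, j < k ∧ FullCol lam mu l k j) ∨
                 (∃ i, i < l ∧ FullRow lam mu l k i)) :
    (∀ j, j < demK lam mu l k →
      ¬ FullCol (demLam lam mu l k) (demMu lam mu l k) (demL lam mu l k) (demK lam mu l k) j) ∧
    (∀ i, i < demL lam mu l k →
      ¬ FullRow (demLam lam mu l k) (demMu lam mu l k) (demL lam mu l k) (demK lam mu l k) i) :=
  stmt6_general lam mu l k

end
end

section
/- Let λ = (b, 1^a) and μ = (d, 1^c) be hooks with b ≥ 2, a ≥ 1, d ≥ 2, c ≥ 1 (so each has at least two distinct part sizes), both contained in the ℓ×k rectangle, and suppose (λ, μ, ℓ×k) is a basic Richardson quadruple. Then there exists ν ⊆ ℓ×k with c^ν_{λ,μ} ≥ 2. -/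
namespace Stmt7Aux

def nuD (b a b' a' : ℕ) : ℕ → ℕ := fun i =>
  if i = 0 then max b b' + 1
  else if i = 1 then min b b'
  else if i ≤ min a a' then 2
  else if i ≤ max a a' + 1 then 1
  else 0

def TA (b a b' a' : ℕ) : ℕ × ℕ → ℕ := fun c =>
  if c.1 = 0 ∧ b ≤ c.2 ∧ c.2 ≤ max b b' then 1
  else if c.1 = 1 ∧ 1 ≤ c.2 ∧ c.2 < min b b' then 1
  else if c.2 = 1 ∧ 2 ≤ c.1 ∧ c.1 ≤ min a a' then c.1
  else if c.2 = 0 ∧ a + 1 ≤ c.1 ∧ c.1 ≤ max a a' + 1 then c.1 - a + min a a'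
  else 0

def TB (b a b' a' : ℕ) : ℕ × ℕ → ℕ := fun c =>
  if c.1 = 0 ∧ b ≤ c.2 ∧ c.2 ≤ max b b' then 1
  else if c.1 = 1 ∧ 1 ≤ c.2 ∧ c.2 < min b b' then (if c.2 = min b b' - 1 then 2 else 1)
  else if c.2 = 1 ∧ 2 ≤ c.1 ∧ c.1 ≤ min a a' then c.1 + 1
  else if c.2 = 0 ∧ c.1 = a + 1 then 1
  else if c.2 = 0 ∧ a + 2 ≤ c.1 ∧ c.1 ≤ max a a' + 1 then c.1 - a + min a a'
  else 0

def xA (a a' : ℕ) (v : ℕ) : ℕ × ℕ :=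
  (if v ≤ min a a' then v else v + a - min a a', if v ≤ min a a' then 1 else 0)

def xB (b b' a a' : ℕ) (v : ℕ) : ℕ × ℕ :=
  (if v = 2 then 1 else if v ≤ min a a' + 1 then v - 1 else v + a - min a a',
   if v = 2 then min b b' - 1 else if v ≤ min a a' + 1 then 1 else 0)

variable {b a b' a' : ℕ}

lemma inSkew_iff (hb : 2 ≤ b) (ha : 1 ≤ a) (hb' : 2 ≤ b') (ha' : 1 ≤ a') (c : ℕ × ℕ) :
    InSkew (nuD b a b' a') (hookP b a) c ↔
      ((c.1 = 0 ∧ b ≤ c.2 ∧ c.2 ≤ max b b') ∨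
       (c.1 = 1 ∧ 1 ≤ c.2 ∧ c.2 < min b b') ∨
       (c.2 = 1 ∧ 2 ≤ c.1 ∧ c.1 ≤ min a a') ∨
       (c.2 = 0 ∧ a + 1 ≤ c.1 ∧ c.1 ≤ max a a' + 1)) := by
  simp only [InSkew, nuD, hookP]
  split_ifs <;> omega

lemma TA_le (ha' : 1 ≤ a') (c : ℕ × ℕ) : TA b a b' a' c ≤ a' + 1 := by
  simp only [TA]; split_ifs <;> omega

lemma TB_le (ha' : 1 ≤ a') (c : ℕ × ℕ) : TB b a b' a' c ≤ a' + 1 := by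
  simp only [TB]; split_ifs <;> omega

lemma keyA (hb : 2 ≤ b) (ha : 1 ≤ a) (hb' : 2 ≤ b') (ha' : 1 ≤ a')
    (v : ℕ) (hv2 : 2 ≤ v) (hva : v ≤ a' + 1) (c : ℕ × ℕ) :
    (InSkew (nuD b a b' a') (hookP b a) c ∧ TA b a b' a' c = v) ↔ c = xA a a' v := by
  rw [inSkew_iff hb ha hb' ha', Prod.ext_iff]
  simp only [TA, xA]
  split_ifs <;> omega

lemma keyB (hb : 2 ≤ b) (ha : 1 ≤ a) (hb' : 2 ≤ b') (ha' : 1 ≤ a')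
    (v : ℕ) (hv2 : 2 ≤ v) (hva : v ≤ a' + 1) (c : ℕ × ℕ) :
    (InSkew (nuD b a b' a') (hookP b a) c ∧ TB b a b' a' c = v) ↔ c = xB b b' a a' v := by
  rw [inSkew_iff hb ha hb' ha', Prod.ext_iff]
  simp only [TB, xB]
  split_ifs <;> omega


lemma rowA_lt (ha : 1 ≤ a) (ha' : 1 ≤ a') :
    ∀ v, 2 ≤ v → v ≤ a' → (xA a a' v).1 < (xA a a' (v + 1)).1 := by
  intro v h1 h2
  simp only [xA]
  split_ifs <;> omega

lemma rowA_pos (ha : 1 ≤ a) (ha' : 1 ≤ a') :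
    ∀ v, 2 ≤ v → v ≤ a' + 1 → 1 ≤ (xA a a' v).1 := by
  intro v h1 h2
  simp only [xA]
  split_ifs <;> omega

lemma rowB_lt (ha : 1 ≤ a) (ha' : 1 ≤ a') :
    ∀ v, 2 ≤ v → v ≤ a' → (xB b b' a a' v).1 < (xB b b' a a' (v + 1)).1 := by
  intro v h1 h2
  simp only [xB]
  split_ifs <;> omega

lemma rowB_pos (ha : 1 ≤ a) (ha' : 1 ≤ a') :
    ∀ v, 2 ≤ v → v ≤ a' + 1 → 1 ≤ (xB b b' a a' v).1 := by
  intro v h1 h2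
  simp only [xB]
  split_ifs <;> omega

lemma ballot_aux (ν lam : ℕ → ℕ) (T : ℕ × ℕ → ℕ) (x : ℕ → ℕ × ℕ) (amax : ℕ)
    (hkey : ∀ v, 2 ≤ v → v ≤ amax + 1 → ∀ c, (InSkew ν lam c ∧ T c = v) ↔ c = x v)
    (hbound : ∀ c, InSkew ν lam c → T c ≤ amax + 1)
    (hrow : ∀ v, 2 ≤ v → v ≤ amax → (x v).1 < (x (v + 1)).1)
    (hrowpos : ∀ v, 2 ≤ v → v ≤ amax + 1 → 1 ≤ (x v).1)
    (hone : ∃ y : ℕ × ℕ, y.1 = 0 ∧ InSkew ν lam y ∧ T y = 1)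
    (hfin1 : {c | InSkew ν lam c ∧ T c = 1}.Finite) :
    ∀ c, InSkew ν lam c → ∀ m, 1 ≤ m →
      {c' | InSkew ν lam c' ∧ (ReadBefore c' c ∨ c' = c) ∧ T c' = m + 1}.ncard ≤
      {c' | InSkew ν lam c' ∧ (ReadBefore c' c ∨ c' = c) ∧ T c' = m}.ncard := by
  intro c hc m hm
  by_cases hma : m ≤ amax
  · have hsub : {c' | InSkew ν lam c' ∧ (ReadBefore c' c ∨ c' = c) ∧ T c' = m + 1} ⊆
        {x (m + 1)} := fun c' hc' => (hkey (m + 1) (by omega) (by omega) c').mp ⟨hc'.1, hc'.2.2⟩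
    by_cases hpre : ReadBefore (x (m + 1)) c ∨ x (m + 1) = c
    · have hfst : (x (m + 1)).1 ≤ c.1 := by
        rcases hpre with h | h
        · rcases h with h | ⟨h, _⟩ <;> omega
        · exact le_of_eq (congrArg Prod.fst h)
      have hcpos : 1 ≤ c.1 := le_trans (hrowpos (m + 1) (by omega) (by omega)) hfst
      have hstep : ∃ y, y ∈ {c' | InSkew ν lam c' ∧ (ReadBefore c' c ∨ c' = c) ∧ T c' = m} ∧
          {c' | InSkew ν lam c' ∧ (ReadBefore c' c ∨ c' = c) ∧ T c' = m}.Finite := by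
        by_cases hm2 : 2 ≤ m
        · have hxm := (hkey m hm2 (by omega) (x m)).mpr rfl
          refine ⟨x m, ⟨hxm.1, Or.inl (Or.inl ?_), hxm.2⟩, ?_⟩
          · exact lt_of_lt_of_le (hrow m hm2 (by omega)) hfst
          · exact (Set.finite_singleton (x m)).subset
              (fun c' hc' => (hkey m hm2 (by omega) c').mp ⟨hc'.1, hc'.2.2⟩)
        · have hm1 : m = 1 := by omega
          subst hm1
          obtain ⟨y, hy0, hysk, hyT⟩ := hone
          refine ⟨y, ⟨hysk, Or.inl (Or.inl (by omega)), hyT⟩, ?_⟩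
          exact hfin1.subset (fun c' hc' => ⟨hc'.1, hc'.2.2⟩)
      obtain ⟨y, hyR, hRfin⟩ := hstep
      calc {c' | InSkew ν lam c' ∧ (ReadBefore c' c ∨ c' = c) ∧ T c' = m + 1}.ncard
          ≤ ({x (m + 1)} : Set (ℕ × ℕ)).ncard :=
            Set.ncard_le_ncard hsub (Set.finite_singleton _)
        _ = 1 := Set.ncard_singleton _
        _ ≤ {c' | InSkew ν lam c' ∧ (ReadBefore c' c ∨ c' = c) ∧ T c' = m}.ncard := by
            rw [← Set.ncard_singleton y]
            exact Set.ncard_le_ncard (Set.singleton_subset_iff.mpr hyR) hRfin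
    · have hemp : {c' | InSkew ν lam c' ∧ (ReadBefore c' c ∨ c' = c) ∧ T c' = m + 1} = ∅ :=
        Set.eq_empty_iff_forall_notMem.mpr (fun c' hc' => by
          have hx := hsub hc'
          rw [Set.mem_singleton_iff] at hx
          exact hpre (hx ▸ hc'.2.1))
      rw [hemp]
      simp
  · have hemp : {c' | InSkew ν lam c' ∧ (ReadBefore c' c ∨ c' = c) ∧ T c' = m + 1} = ∅ :=
      Set.eq_empty_iff_forall_notMem.mpr (fun c' hc' => by
        have h1 := hbound c' hc'.1
        have h2 := hc'.2.2
        omega)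
    rw [hemp]
    simp


def FA (b b' : ℕ) : Finset (ℕ × ℕ) :=
  ((Finset.Ico b (max b b' + 1)).image fun j => ((0 : ℕ), j)) ∪
    ((Finset.Ico 1 (min b b')).image fun j => ((1 : ℕ), j))

def FB (b b' a : ℕ) : Finset (ℕ × ℕ) :=
  (((Finset.Ico b (max b b' + 1)).image fun j => ((0 : ℕ), j)) ∪
    ((Finset.Ico 1 (min b b' - 1)).image fun j => ((1 : ℕ), j))) ∪ {(a + 1, 0)}

lemma cardFA (hb : 2 ≤ b) (hb' : 2 ≤ b') : (FA b b').card = b' := by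
  rw [FA, Finset.card_union_of_disjoint, Finset.card_image_of_injective _
      (fun x y h => by simpa using h), Finset.card_image_of_injective _
      (fun x y h => by simpa using h), Nat.card_Ico, Nat.card_Ico]
  · omega
  · simp only [Finset.disjoint_left, Finset.mem_image, Finset.mem_Ico]
    rintro p ⟨x, hx, rfl⟩ ⟨y, hy, hpy⟩
    simp at hpy

lemma cardFB (hb : 2 ≤ b) (hb' : 2 ≤ b') (ha : 1 ≤ a) : (FB b b' a).card = b' := by
  rw [FB, Finset.card_union_of_disjoint, Finset.card_union_of_disjoint,
    Finset.card_image_of_injective _ (fun x y h => by simpa using h),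
    Finset.card_image_of_injective _ (fun x y h => by simpa using h),
    Nat.card_Ico, Nat.card_Ico, Finset.card_singleton]
  · omega
  · simp only [Finset.disjoint_left, Finset.mem_image, Finset.mem_Ico]
    rintro p ⟨x, hx, rfl⟩ ⟨y, hy, hpy⟩
    simp at hpy
  · simp only [Finset.disjoint_left, Finset.mem_union, Finset.mem_image, Finset.mem_Ico,
      Finset.mem_singleton]
    rintro p (⟨x, hx, rfl⟩ | ⟨x, hx, rfl⟩) hp <;> simp at hp <;> omega

lemma onesA (hb : 2 ≤ b) (ha : 1 ≤ a) (hb' : 2 ≤ b') (ha' : 1 ≤ a') :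
    {c | InSkew (nuD b a b' a') (hookP b a) c ∧ TA b a b' a' c = 1} = ↑(FA b b') := by
  ext ⟨i, j⟩
  simp only [Set.mem_setOf_eq, inSkew_iff hb ha hb' ha', TA, FA, Finset.coe_union,
    Set.mem_union, Finset.coe_image, Set.mem_image, Finset.mem_coe, Finset.mem_Ico,
    Prod.mk.injEq]
  constructor
  · rintro ⟨hsk, hT⟩
    split_ifs at hT with h1 h2 h3 h4
    all_goals first
      | exact Or.inl ⟨j, by omega, by omega, rfl⟩
      | exact Or.inr ⟨j, by omega, by omega, rfl⟩
      | omega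
  · rintro (⟨x, hx, hi, hj⟩ | ⟨x, hx, hi, hj⟩) <;>
      · refine ⟨by omega, ?_⟩
        split_ifs <;> omega

lemma onesB (hb : 2 ≤ b) (ha : 1 ≤ a) (hb' : 2 ≤ b') (ha' : 1 ≤ a') :
    {c | InSkew (nuD b a b' a') (hookP b a) c ∧ TB b a b' a' c = 1} = ↑(FB b b' a) := by
  ext ⟨i, j⟩
  simp only [Set.mem_setOf_eq, inSkew_iff hb ha hb' ha', TB, FB, Finset.coe_union,
    Set.mem_union, Finset.coe_image, Set.mem_image, Finset.mem_coe, Finset.mem_Ico,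
    Finset.coe_singleton, Set.mem_singleton_iff, Prod.mk.injEq]
  constructor
  · rintro ⟨hsk, hT⟩
    split_ifs at hT with h1 h2 h2' h3 h4 h5
    all_goals first
      | exact Or.inl (Or.inl ⟨j, by omega, by omega, rfl⟩)
      | exact Or.inl (Or.inr ⟨j, by omega, by omega, rfl⟩)
      | exact Or.inr (by omega)
      | omega
  · rintro ((⟨x, hx, hi, hj⟩ | ⟨x, hx, hi, hj⟩) | ⟨hi, hj⟩) <;>
      · refine ⟨by omega, ?_⟩
        split_ifs <;> omega


lemma TA_pair (b a b' a' i j : ℕ) : TA b a b' a' (i, j) =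
    (if i = 0 ∧ b ≤ j ∧ j ≤ max b b' then 1
    else if i = 1 ∧ 1 ≤ j ∧ j < min b b' then 1
    else if j = 1 ∧ 2 ≤ i ∧ i ≤ min a a' then i
    else if j = 0 ∧ a + 1 ≤ i ∧ i ≤ max a a' + 1 then i - a + min a a' else 0) := rfl

lemma TB_pair (b a b' a' i j : ℕ) : TB b a b' a' (i, j) =
    (if i = 0 ∧ b ≤ j ∧ j ≤ max b b' then 1
    else if i = 1 ∧ 1 ≤ j ∧ j < min b b' then (if j = min b b' - 1 then 2 else 1)
    else if j = 1 ∧ 2 ≤ i ∧ i ≤ min a a' then i + 1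
    else if j = 0 ∧ i = a + 1 then 1
    else if j = 0 ∧ a + 2 ≤ i ∧ i ≤ max a a' + 1 then i - a + min a a' else 0) := rfl

lemma contentA (hb : 2 ≤ b) (ha : 1 ≤ a) (hb' : 2 ≤ b') (ha' : 1 ≤ a') (m : ℕ) :
    {c | InSkew (nuD b a b' a') (hookP b a) c ∧ TA b a b' a' c = m + 1}.Finite ∧
    {c | InSkew (nuD b a b' a') (hookP b a) c ∧ TA b a b' a' c = m + 1}.ncard =
      hookP b' a' m := by
  rcases Nat.eq_zero_or_pos m with hm0 | hm0
  · subst hm0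
    rw [onesA hb ha hb' ha']
    refine ⟨Finset.finite_toSet _, ?_⟩
    rw [Set.ncard_coe_finset, cardFA hb hb']
    simp [hookP]
  · by_cases hma : m ≤ a'
    · have hset : {c | InSkew (nuD b a b' a') (hookP b a) c ∧ TA b a b' a' c = m + 1} =
          {xA a a' (m + 1)} := Set.ext fun c => by
        rw [Set.mem_singleton_iff]
        exact keyA hb ha hb' ha' (m + 1) (by omega) (by omega) c
      rw [hset]
      refine ⟨Set.finite_singleton _, ?_⟩
      rw [Set.ncard_singleton]
      simp only [hookP]
      rw [if_neg (by omega), if_pos hma]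
    · have hset : {c | InSkew (nuD b a b' a') (hookP b a) c ∧ TA b a b' a' c = m + 1} = ∅ :=
        Set.eq_empty_iff_forall_notMem.mpr fun c hc => by
          have h1 := TA_le (b := b) (a := a) (b' := b') (a' := a') ha' c
          have h2 := hc.2
          omega
      rw [hset]
      refine ⟨Set.finite_empty, ?_⟩
      rw [Set.ncard_empty]
      simp only [hookP]
      rw [if_neg (by omega), if_neg (by omega)]

lemma contentB (hb : 2 ≤ b) (ha : 1 ≤ a) (hb' : 2 ≤ b') (ha' : 1 ≤ a') (m : ℕ) :
    {c | InSkew (nuD b a b' a') (hookP b a) c ∧ TB b a b' a' c = m + 1}.Finite ∧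
    {c | InSkew (nuD b a b' a') (hookP b a) c ∧ TB b a b' a' c = m + 1}.ncard =
      hookP b' a' m := by
  rcases Nat.eq_zero_or_pos m with hm0 | hm0
  · subst hm0
    rw [onesB hb ha hb' ha']
    refine ⟨Finset.finite_toSet _, ?_⟩
    rw [Set.ncard_coe_finset, cardFB hb hb' ha]
    simp [hookP]
  · by_cases hma : m ≤ a'
    · have hset : {c | InSkew (nuD b a b' a') (hookP b a) c ∧ TB b a b' a' c = m + 1} =
          {xB b b' a a' (m + 1)} := Set.ext fun c => by
        rw [Set.mem_singleton_iff]
        exact keyB hb ha hb' ha' (m + 1) (by omega) (by omega) c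
      rw [hset]
      refine ⟨Set.finite_singleton _, ?_⟩
      rw [Set.ncard_singleton]
      simp only [hookP]
      rw [if_neg (by omega), if_pos hma]
    · have hset : {c | InSkew (nuD b a b' a') (hookP b a) c ∧ TB b a b' a' c = m + 1} = ∅ :=
        Set.eq_empty_iff_forall_notMem.mpr fun c hc => by
          have h1 := TB_le (b := b) (a := a) (b' := b') (a' := a') ha' c
          have h2 := hc.2
          omega
      rw [hset]
      refine ⟨Set.finite_empty, ?_⟩
      rw [Set.ncard_empty]
      simp only [hookP]
      rw [if_neg (by omega), if_neg (by omega)]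

lemma isLRA (hb : 2 ≤ b) (ha : 1 ≤ a) (hb' : 2 ≤ b') (ha' : 1 ≤ a') :
    IsLRFilling (hookP b a) (hookP b' a') (nuD b a b' a') (TA b a b' a') := by
  refine ⟨?_, ?_, ?_, ?_, contentA hb ha hb' ha', ?_⟩
  · intro c hc
    obtain ⟨i, j⟩ := c
    rw [inSkew_iff hb ha hb' ha'] at hc
    dsimp only at hc
    rw [TA_pair]
    split_ifs <;> omega
  · intro c hc
    obtain ⟨i, j⟩ := c
    rw [inSkew_iff hb ha hb' ha'] at hc
    dsimp only at hc
    rw [TA_pair]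
    rcases hc with h | h | h | h <;> split_ifs <;> omega
  · intro i j j' h h' hle
    rw [inSkew_iff hb ha hb' ha'] at h h'
    dsimp only at h h'
    rw [TA_pair, TA_pair]
    rcases h with h | h | h | h <;> rcases h' with h' | h' | h' | h' <;>
      split_ifs <;> omega
  · intro i j h h'
    rw [inSkew_iff hb ha hb' ha'] at h h'
    dsimp only at h h'
    rw [TA_pair, TA_pair]
    rcases h with h | h | h | h <;> rcases h' with h' | h' | h' | h' <;>
      split_ifs <;> omega
  · refine ballot_aux _ _ _ (xA a a') a' (keyA hb ha hb' ha') (fun c _ => TA_le ha' c)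
      (rowA_lt ha ha') (rowA_pos ha ha') ⟨(0, b), rfl, ?_, ?_⟩ ?_
    · rw [inSkew_iff hb ha hb' ha']
      dsimp only
      omega
    · rw [TA_pair]
      split_ifs <;> omega
    · rw [onesA hb ha hb' ha']
      exact Finset.finite_toSet _

lemma evB0 {b a b' a' i j : ℕ} (h0 : i = 0) (h1 : b ≤ j) (h2 : j ≤ max b b') :
    TB b a b' a' (i, j) = 1 := by
  rw [TB_pair, if_pos ⟨h0, h1, h2⟩]

lemma evB1 {b a b' a' i j : ℕ} (h0 : i = 1) (h1 : 1 ≤ j) (h2 : j < min b b') :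
    TB b a b' a' (i, j) = if j = min b b' - 1 then 2 else 1 := by
  rw [TB_pair, if_neg (by omega), if_pos ⟨h0, h1, h2⟩]

lemma evB2 {b a b' a' i j : ℕ} (h0 : j = 1) (h1 : 2 ≤ i) (h2 : i ≤ min a a') :
    TB b a b' a' (i, j) = i + 1 := by
  rw [TB_pair, if_neg (by omega), if_neg (by omega), if_pos ⟨h0, h1, h2⟩]

lemma evB3 {b a b' a' i j : ℕ} (h0 : j = 0) (h1 : a + 1 ≤ i) (h2 : i ≤ max a a' + 1)
    (ha : 1 ≤ a) : TB b a b' a' (i, j) = if i = a + 1 then 1 else i - a + min a a' := by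
  rw [TB_pair, if_neg (by omega), if_neg (by omega), if_neg (by omega)]
  by_cases hi : i = a + 1
  · rw [if_pos ⟨h0, hi⟩, if_pos hi]
  · rw [if_neg (by omega), if_pos ⟨h0, by omega, h2⟩, if_neg hi]

lemma isLRB (hb : 2 ≤ b) (ha : 1 ≤ a) (hb' : 2 ≤ b') (ha' : 1 ≤ a') :
    IsLRFilling (hookP b a) (hookP b' a') (nuD b a b' a') (TB b a b' a') := by
  refine ⟨?_, ?_, ?_, ?_, contentB hb ha hb' ha', ?_⟩
  · intro c hc
    obtain ⟨i, j⟩ := c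
    rw [inSkew_iff hb ha hb' ha'] at hc
    dsimp only at hc
    rw [TB_pair]
    split_ifs <;> omega
  · intro c hc
    obtain ⟨i, j⟩ := c
    rw [inSkew_iff hb ha hb' ha'] at hc
    dsimp only at hc
    rw [TB_pair]
    rcases hc with h | h | h | h <;> split_ifs <;> omega
  · intro i j j' h h' hle
    rw [inSkew_iff hb ha hb' ha'] at h h'
    dsimp only at h h'
    rcases h with h | h | h | h <;> rcases h' with h' | h' | h' | h' <;>
      first
      | omega
      | (rw [evB0 h.1 h.2.1 h.2.2, evB0 h'.1 h'.2.1 h'.2.2])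
      | (rw [evB1 h.1 h.2.1 h.2.2, evB1 h'.1 h'.2.1 h'.2.2] <;> (split_ifs <;> omega))
      | (rw [evB2 h.1 h.2.1 h.2.2, evB2 h'.1 h'.2.1 h'.2.2] <;> omega)
      | (rw [evB3 h.1 h.2.1 h.2.2 ha, evB3 h'.1 h'.2.1 h'.2.2 ha] <;> (split_ifs <;> omega))
  · intro i j h h'
    rw [inSkew_iff hb ha hb' ha'] at h h'
    dsimp only at h h'
    rcases h with h | h | h | h <;> rcases h' with h' | h' | h' | h' <;>
      first
      | omega
      | (rw [evB1 h.1 h.2.1 h.2.2, evB2 h'.1 h'.2.1 h'.2.2] <;> (split_ifs <;> omega))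
      | (rw [evB2 h.1 h.2.1 h.2.2, evB2 h'.1 h'.2.1 h'.2.2] <;> omega)
      | (rw [evB3 h.1 h.2.1 h.2.2 ha, evB3 h'.1 h'.2.1 h'.2.2 ha] <;> (split_ifs <;> omega))
  · refine ballot_aux _ _ _ (xB b b' a a') a' (keyB hb ha hb' ha') (fun c _ => TB_le ha' c)
      (rowB_lt ha ha') (rowB_pos ha ha') ⟨(0, b), rfl, ?_, ?_⟩ ?_
    · rw [inSkew_iff hb ha hb' ha']
      dsimp only
      omega
    · rw [TB_pair]
      split_ifs <;> omega
    · rw [onesB hb ha hb' ha']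
      exact Finset.finite_toSet _

lemma bound_of_isLR (hb : 2 ≤ b) (ha : 1 ≤ a) (hb' : 2 ≤ b') (ha' : 1 ≤ a')
    (T : ℕ × ℕ → ℕ)
    (hT : IsLRFilling (hookP b a) (hookP b' a') (nuD b a b' a') T) (c : ℕ × ℕ) :
    T c ≤ a' + 1 := by
  by_cases hsk : InSkew (nuD b a b' a') (hookP b a) c
  · by_contra hcon
    push_neg at hcon
    obtain ⟨hfin, hcard⟩ := hT.2.2.2.2.1 (T c - 1)
    have hhook : hookP b' a' (T c - 1) = 0 := by
      simp only [hookP]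
      rw [if_neg (by omega), if_neg (by omega)]
    rw [hhook] at hcard
    have hemp := (Set.ncard_eq_zero hfin).mp hcard
    have hmem : c ∈ {c' | InSkew (nuD b a b' a') (hookP b a) c' ∧ T c' = (T c - 1) + 1} :=
      ⟨hsk, by omega⟩
    rw [hemp] at hmem
    exact hmem
  · rw [hT.1 c hsk]
    omega

end Stmt7Aux

open Stmt7Aux in
/-- If `λ = (b, 1^a)` and `μ = (b', 1^{a'})` are both hooks with at least two
distinct part sizes and `(λ, μ, l × k)` is a basic Richardson quadruple, then some
LR coefficient is at least 2. -/
theorem stmt7 (b a b' a' l k : ℕ)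
    (hb : 2 ≤ b) (ha : 1 ≤ a) (hb' : 2 ≤ b') (ha' : 1 ≤ a')
    (hbasic : BasicRQ (hookP b a) (hookP b' a') l k) :
    ∃ ν : ℕ → ℕ, InRect ν l k ∧ 2 ≤ lrCoeff (hookP b a) (hookP b' a') ν := by
  obtain ⟨hInL, hInM, hDisj, hNoCol, hNoRow⟩ := hbasic
  have hl0 : 1 ≤ l := by
    by_contra hcon
    have h0 := hInL.2.2 0 (by omega)
    simp [hookP] at h0
    omega
  have hkb : b ≤ k := by
    have := hInL.2.1
    simpa [hookP] using this
  have hbk : b < k := by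
    by_contra hcon
    refine hNoRow 0 (by omega) (fun j hj => Or.inl ?_)
    simp only [InLam, hookP]
    split_ifs <;> omega
  have hbk' : b' < k := by
    by_contra hcon
    refine hNoRow (l - 1) (by omega) (fun j hj => Or.inr ?_)
    simp only [InRot, hookP]
    split_ifs <;> omega
  have hla : a + 2 ≤ l := by
    by_contra hcon
    refine hNoCol 0 (by omega) (fun i hi => Or.inl ?_)
    simp only [InLam, hookP]
    split_ifs <;> omega
  have hla' : a' + 2 ≤ l := by
    by_contra hcon
    refine hNoCol (k - 1) (by omega) (fun i hi => Or.inr ?_)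
    simp only [InRot, hookP]
    split_ifs <;> omega
  refine ⟨nuD b a b' a', ⟨⟨?_, ⟨max a a' + 2, ?_⟩⟩, ?_, ?_⟩, ?_⟩
  · intro i j hij
    simp only [nuD]
    split_ifs <;> omega
  · intro i hi
    simp only [nuD]
    split_ifs <;> omega
  · simp only [nuD]
    split_ifs <;> omega
  · intro i hi
    simp only [nuD]
    split_ifs <;> omega
  · haveI hfinT : Finite {T : ℕ × ℕ → ℕ //
        IsLRFilling (hookP b a) (hookP b' a') (nuD b a b' a') T} := by
      apply Finite.of_injective
        (β := (Fin (max a a' + 2) × Fin (max b b' + 1)) → Fin (a' + 2))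
        (fun S d => ⟨S.1 (d.1.1, d.2.1), by
          have := bound_of_isLR hb ha hb' ha' S.1 S.2 (d.1.1, d.2.1); omega⟩)
      intro S1 S2 h
      apply Subtype.ext
      funext c
      by_cases hsk : InSkew (nuD b a b' a') (hookP b a) c
      · have hbd : c.1 < max a a' + 2 ∧ c.2 < max b b' + 1 := by
          rw [inSkew_iff hb ha hb' ha'] at hsk
          omega
        have h2 := congrFun h (⟨c.1, hbd.1⟩, ⟨c.2, hbd.2⟩)
        have h3 := congrArg Fin.val h2
        simpa using h3
      · rw [S1.2.1 c hsk, S2.2.1 c hsk]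
    have hnt : Nontrivial {T : ℕ × ℕ → ℕ //
        IsLRFilling (hookP b a) (hookP b' a') (nuD b a b' a') T} := by
      refine ⟨⟨TA b a b' a', isLRA hb ha hb' ha'⟩, ⟨TB b a b' a', isLRB hb ha hb' ha'⟩, ?_⟩
      intro hEq
      have h1 := congrFun (congrArg Subtype.val hEq) (1, min b b' - 1)
      dsimp only at h1
      rw [TA_pair, TB_pair] at h1
      split_ifs at h1 <;> omega
    exact Finite.one_lt_card_iff_nontrivial.mpr hnt
end

section
/- (Stembridge, case used in proof.) If λ ⊆ ℓ×k is a partition with at least two distinct part sizes and μ ⊆ ℓ×k is a hook (b,1^a) with b ≥ 2, a ≥ 1, and (λ, μ, ℓ×k) is a basic Richardson quadruple, then there exists a partition ν ⊆ ℓ×k with c^ν_{λ,μ} ≥ 2. -/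
/-!
Write `μ = (b, 1^a)`. Since `λ` has two distinct part sizes and a zero row inside the
rectangle, it has two corners in rows `x < y`, and there is a set `R` of `a + 1` rows through `x`
and `y` that is closed under predecessors except at `x` and `y`. Let `ν` be `λ` plus one box in
row `0` and in each row of `R`, plus a horizontal strip of `b - 2` further boxes chosen so that
rows `x` and `y` of `ν` still end no later than rows `x - 1` and `y - 1` of `λ`. Then consecutive
rows of `ν/λ` overlap in at most one box, and only below a row of `R \ {x, y}`. Filling `ν/λ`
with `1`s except for the last box of each row of `R \ {z}`, labelled `2, …, a + 1` from top to
bottom, gives a Littlewood–Richardson tableau for `z = x` and for `z = y`, and the two differ,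
so `c^ν_{λ,μ} ≥ 2`.
-/

open Finset

lemma Nat.exists_count_eq_of_lt_count {p : ℕ → Prop} [DecidablePred p] {v n : ℕ}
    (h : v < Nat.count p n) : ∃ t < n, p t ∧ Nat.count p t = v := by
  have hv : ∀ hf : (Set.ofPred p).Finite, v < #hf.toFinset :=
    fun hf => h.trans_le (Nat.count_le_card hf n)
  exact ⟨Nat.nth p v, Nat.nth_lt_of_lt_count h, Nat.nth_mem v hv, Nat.count_nth hv⟩

lemma Nat.count_mem_eq_card {S : Finset ℕ} {l : ℕ} (h : S ⊆ range l) :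
    Nat.count (· ∈ S) l = #S := by
  rw [Nat.count_eq_card_filter_range, filter_mem_eq_inter, inter_eq_right.2 h]

lemma fst_le_of_readBefore_or_eq {c' c : ℕ × ℕ} (h : ReadBefore c' c ∨ c' = c) : c'.1 ≤ c.1 := by
  rcases h with h | rfl
  · unfold ReadBefore at h
    omega
  · exact le_rfl

def skewCells (lam ν : ℕ → ℕ) (l : ℕ) : Finset (ℕ × ℕ) :=
  (range l).biUnion fun i => (Ico (lam i) (ν i)).map ⟨Prod.mk i, Prod.mk_right_injective i⟩

section skewCells

variable {lam ν : ℕ → ℕ} {l : ℕ}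

lemma coe_skewCells (hν : ∀ i, l ≤ i → ν i = 0) :
    (skewCells lam ν l : Set (ℕ × ℕ)) = {c | InSkew ν lam c} := by
  ext ⟨i, j⟩
  simp only [skewCells, coe_biUnion, coe_range, Set.mem_Iio, coe_map, Function.Embedding.coeFn_mk,
    coe_Ico, Set.mem_iUnion, Set.mem_image, Set.mem_Ico, Prod.mk.injEq, exists_prop,
    Set.mem_ofPred_eq, InSkew]
  constructor
  · rintro ⟨i, -, j, hj, rfl, rfl⟩
    exact hj
  · intro hj
    refine ⟨i, ?_, j, hj, rfl, rfl⟩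
    by_contra hi
    have := hν i (not_lt.1 hi)
    omega

lemma card_skewCells : #(skewCells lam ν l) = ∑ i ∈ range l, (ν i - lam i) := by
  rw [skewCells, card_biUnion]
  · simp
  · intro i _ i' _ hii'
    simp only [Function.onFun, disjoint_left, mem_map, Function.Embedding.coeFn_mk]
    rintro _ ⟨j, -, rfl⟩ ⟨j', -, h⟩
    exact hii' (congrArg Prod.fst h).symm

end skewCells

instance (ν lam : ℕ → ℕ) : DecidablePred (InSkew ν lam) :=
  fun _ => inferInstanceAs (Decidable (_ ∧ _))

def rowFilling (lam ν : ℕ → ℕ) (S : Finset ℕ) (c : ℕ × ℕ) : ℕ :=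
  if InSkew ν lam c then
    if c.1 ∈ S ∧ c.2 + 1 = ν c.1 then Nat.count (· ∈ S) c.1 + 2 else 1
  else 0

section rowFilling

variable {lam ν : ℕ → ℕ} {S : Finset ℕ}

lemma one_le_rowFilling {c : ℕ × ℕ} (hc : InSkew ν lam c) : 1 ≤ rowFilling lam ν S c := by
  unfold rowFilling
  split_ifs <;> omega

lemma inSkew_and_rowFilling_eq_one_iff {c : ℕ × ℕ} :
    InSkew ν lam c ∧ rowFilling lam ν S c = 1 ↔
      InSkew ν lam c ∧ ¬ (c.1 ∈ S ∧ c.2 + 1 = ν c.1) := by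
  unfold rowFilling
  by_cases hc : InSkew ν lam c
  · by_cases h : c.1 ∈ S ∧ c.2 + 1 = ν c.1 <;> simp [hc, h]
  · simp [hc]

lemma inSkew_and_rowFilling_eq_add_two_iff (hS : ∀ s ∈ S, lam s < ν s) {c : ℕ × ℕ} {v : ℕ} :
    InSkew ν lam c ∧ rowFilling lam ν S c = v + 2 ↔
      c.1 ∈ S ∧ Nat.count (· ∈ S) c.1 = v ∧ c.2 + 1 = ν c.1 := by
  unfold rowFilling
  constructor
  · rintro ⟨hc, h⟩
    rw [if_pos hc] at h
    split_ifs at h with hlast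
    · exact ⟨hlast.1, by omega, hlast.2⟩
    · omega
  · rintro ⟨hs, hcount, hlast⟩
    have hc : InSkew ν lam c := by
      have := hS _ hs
      unfold InSkew
      omega
    rw [if_pos hc, if_pos ⟨hs, hlast⟩, hcount]
    exact ⟨hc, rfl⟩

lemma rowFilling_ne_of_mem_of_notMem {S' : Finset ℕ} {s : ℕ} (hs : s ∈ S) (hs' : s ∉ S')
    (hlt : lam s < ν s) : rowFilling lam ν S ≠ rowFilling lam ν S' := by
  intro h
  have hc : InSkew ν lam (s, ν s - 1) := by
    unfold InSkew
    dsimp only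
    omega
  have := congrFun h (s, ν s - 1)
  simp only [rowFilling, if_pos hc] at this
  rw [if_pos ⟨hs, by omega⟩, if_neg (by simp [hs'])] at this
  omega

variable {l : ℕ}

lemma subset_range_of_lt (hν : ∀ i, l ≤ i → ν i = 0) (hS : ∀ s ∈ S, lam s < ν s) :
    S ⊆ range l := by
  intro s hs
  have := hS s hs
  by_contra h
  rw [hν s (by simpa using h)] at this
  omega

lemma ncard_rowFilling_eq_one (hν : ∀ i, l ≤ i → ν i = 0) (hS : ∀ s ∈ S, lam s < ν s) :
    {c | InSkew ν lam c ∧ rowFilling lam ν S c = 1}.ncard =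
      ∑ i ∈ range l, (ν i - lam i) - #S := by
  have hlast : {c | InSkew ν lam c ∧ rowFilling lam ν S c = 1} =
      ↑(skewCells lam ν l \ S.image fun s => (s, ν s - 1)) := by
    ext c
    rw [Set.mem_ofPred_eq, inSkew_and_rowFilling_eq_one_iff, coe_sdiff, coe_skewCells hν]
    simp only [Set.mem_sdiff, Set.mem_ofPred_eq, coe_image, Set.mem_image, mem_coe, InSkew]
    constructor
    · rintro ⟨hc, hnot⟩
      refine ⟨hc, ?_⟩
      rintro ⟨s, hs, rfl⟩
      exact hnot ⟨hs, by have := hS s hs; dsimp only; omega⟩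
    · rintro ⟨hc, hnot⟩
      refine ⟨hc, fun ⟨hs, hc2⟩ => hnot ⟨c.1, hs, ?_⟩⟩
      exact Prod.ext rfl (by dsimp only; omega)
  have hsub : (S.image fun s => (s, ν s - 1)) ⊆ skewCells lam ν l := by
    intro c hc
    rw [← mem_coe, coe_skewCells hν]
    obtain ⟨s, hs, rfl⟩ := mem_image.1 hc
    have := hS s hs
    show lam s ≤ ν s - 1 ∧ ν s - 1 < ν s
    omega
  rw [hlast, Set.ncard_coe_finset, card_sdiff_of_subset hsub, card_skewCells,
    card_image_of_injective _ (fun s t h => congrArg Prod.fst h)]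

lemma ncard_rowFilling_eq_add_two (hν : ∀ i, l ≤ i → ν i = 0) (hS : ∀ s ∈ S, lam s < ν s)
    (v : ℕ) :
    {c | InSkew ν lam c ∧ rowFilling lam ν S c = v + 2}.ncard = if v < #S then 1 else 0 := by
  have hcard := Nat.count_mem_eq_card (subset_range_of_lt hν hS)
  simp_rw [inSkew_and_rowFilling_eq_add_two_iff hS]
  split_ifs with hv
  · obtain ⟨t, -, ht, htv⟩ := Nat.exists_count_eq_of_lt_count (hcard ▸ hv)
    rw [Set.ncard_eq_one]
    refine ⟨(t, ν t - 1), Set.ext fun ⟨i, j⟩ => ⟨fun ⟨hi, hiv, hj⟩ => ?_, ?_⟩⟩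
    · obtain rfl : i = t := Nat.count_injective hi ht (hiv.trans htv.symm)
      exact Prod.ext rfl (by dsimp only at hj ⊢; omega)
    · intro h
      obtain ⟨rfl, rfl⟩ := Prod.mk.inj (Set.mem_singleton_iff.1 h)
      have := hS i ht
      exact ⟨ht, htv, by dsimp only; omega⟩
  · convert Set.ncard_empty (ℕ × ℕ)
    refine Set.eq_empty_of_forall_notMem fun c ⟨hc, hcv, _⟩ => hv ?_
    rw [← hcard, ← hcv]
    exact Nat.count_strict_mono hc (mem_range.1 (subset_range_of_lt hν hS hc))

lemma rowFilling_ballot (hS : ∀ s ∈ S, lam s < ν s) (h0 : lam 0 < ν 0) (h0S : 0 ∉ S)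
    (hfin : {c | InSkew ν lam c}.Finite) (c : ℕ × ℕ) (v : ℕ) :
    {c' | InSkew ν lam c' ∧ (ReadBefore c' c ∨ c' = c) ∧ rowFilling lam ν S c' = v + 2}.ncard ≤
      {c' | InSkew ν lam c' ∧ (ReadBefore c' c ∨ c' = c) ∧ rowFilling lam ν S c' = v + 1}.ncard := by
  set A := {c' | InSkew ν lam c' ∧ (ReadBefore c' c ∨ c' = c) ∧ rowFilling lam ν S c' = v + 2}
  rcases A.eq_empty_or_nonempty with hA | ⟨p, hpsk, hpc, hpv⟩
  · simp [hA]
  obtain ⟨hp, hpcount, hplast⟩ := (inSkew_and_rowFilling_eq_add_two_iff hS).1 ⟨hpsk, hpv⟩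
  have hA : A ⊆ {p} := by
    rintro q ⟨hqsk, -, hqv⟩
    obtain ⟨hq, hqcount, hqlast⟩ := (inSkew_and_rowFilling_eq_add_two_iff hS).1 ⟨hqsk, hqv⟩
    have hqp : q.1 = p.1 := Nat.count_injective hq hp (hqcount.trans hpcount.symm)
    exact Prod.ext hqp (by rw [hqp] at hqlast; omega)
  obtain ⟨q, hqsk, hqp, hqv⟩ :
      ∃ q, InSkew ν lam q ∧ q.1 < p.1 ∧ rowFilling lam ν S q = v + 1 := by
    rcases v with _ | w
    · refine ⟨(0, lam 0), ⟨le_rfl, h0⟩, Nat.pos_of_ne_zero fun h => h0S (h ▸ hp), ?_⟩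
      exact ((inSkew_and_rowFilling_eq_one_iff).2 ⟨⟨le_rfl, h0⟩, fun h => h0S h.1⟩).2
    · obtain ⟨t, htp, ht, htw⟩ :=
        Nat.exists_count_eq_of_lt_count (p := (· ∈ S)) (v := w) (n := p.1) (by omega)
      have := hS t ht
      obtain ⟨hsk, hval⟩ := (inSkew_and_rowFilling_eq_add_two_iff hS (c := (t, ν t - 1))).2
        ⟨ht, htw, by dsimp only; omega⟩
      exact ⟨_, hsk, htp, hval⟩
  have hB : 0 < {c' | InSkew ν lam c' ∧ (ReadBefore c' c ∨ c' = c) ∧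
      rowFilling lam ν S c' = v + 1}.ncard := by
    rw [Set.ncard_pos (hfin.subset fun _ h => h.1)]
    exact ⟨q, hqsk, Or.inl (Or.inl (hqp.trans_le (fst_le_of_readBefore_or_eq hpc))), hqv⟩
  calc A.ncard ≤ ({p} : Set (ℕ × ℕ)).ncard := Set.ncard_le_ncard hA (Set.finite_singleton p)
    _ = 1 := Set.ncard_singleton p
    _ ≤ _ := hB

theorem isLRFilling_rowFilling {a b : ℕ} (hν : ∀ i, l ≤ i → ν i = 0)
    (hover : ∀ i, ν (i + 1) ≤ lam i + 1) (hstack : ∀ i, lam i < ν (i + 1) → i + 1 ∈ S)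
    (hS : ∀ s ∈ S, lam s < ν s) (h0 : lam 0 < ν 0) (h0S : 0 ∉ S) (hcard : #S = a)
    (hsum : ∑ i ∈ range l, (ν i - lam i) = a + b) :
    IsLRFilling lam (hookP b a) ν (rowFilling lam ν S) := by
  have hfin : {c | InSkew ν lam c}.Finite := coe_skewCells hν ▸ (skewCells lam ν l).finite_toSet
  refine ⟨fun c hc => if_neg hc, fun c hc => one_le_rowFilling hc, ?rows, ?cols, ?content,
    fun c _ m hm => ?ballot⟩
  case rows =>
    intro i j j' hj hj' hjj'
    by_cases hlast : i ∈ S ∧ j + 1 = ν i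
    · obtain rfl : j' = j := by simp only [InSkew] at hj'; omega
      exact le_rfl
    · rw [((inSkew_and_rowFilling_eq_one_iff).2 ⟨hj, hlast⟩).2]
      exact one_le_rowFilling hj'
  case cols =>
    intro i j hj hj'
    simp only [InSkew] at hj hj'
    have := hover i
    have hi : i + 1 ∈ S := hstack i (by omega)
    rw [((inSkew_and_rowFilling_eq_add_two_iff hS (c := (i + 1, j))).2
      ⟨hi, rfl, by dsimp only; omega⟩).2]
    rw [rowFilling]
    dsimp only
    split_ifs with _ hlast
    · have := Nat.count_strict_mono (p := (· ∈ S)) hlast.1 i.lt_add_one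
      omega
    · omega
    · omega
  case content =>
    intro m
    refine ⟨hfin.subset fun _ h => h.1, ?_⟩
    rcases m with _ | v
    · rw [ncard_rowFilling_eq_one hν hS, hsum, hcard, Nat.add_sub_cancel_left]
      rfl
    · rw [ncard_rowFilling_eq_add_two hν hS, hcard]
      by_cases hv : v < a <;> simp [hookP, hv]
  case ballot =>
    obtain ⟨v, rfl⟩ := Nat.exists_eq_add_of_le' hm
    exact rowFilling_ballot hS h0 h0S hfin c v

end rowFilling

lemma hookP_eq_zero {b a m : ℕ} (hm : a + 1 ≤ m) : hookP b a m = 0 := by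
  simp only [hookP]
  rw [if_neg (by omega), if_neg (by omega)]

lemma IsLRFilling.apply_le {lam mu ν : ℕ → ℕ} {T : ℕ × ℕ → ℕ} {N : ℕ}
    (hmu : ∀ m, N ≤ m → mu m = 0) (hT : IsLRFilling lam mu ν T) (c : ℕ × ℕ) : T c ≤ N := by
  by_contra! h
  have hc : InSkew ν lam c := by
    by_contra hc
    rw [hT.1 c hc] at h
    omega
  obtain ⟨hfin, hcard⟩ := hT.2.2.2.2.1 (T c - 1)
  rw [hmu _ (by omega), Set.ncard_eq_zero hfin] at hcard
  exact (Set.eq_empty_iff_forall_notMem.1 hcard) c ⟨hc, by omega⟩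

lemma finite_isLRFilling {lam mu ν : ℕ → ℕ} {l N : ℕ} (hν : ∀ i, l ≤ i → ν i = 0)
    (hmu : ∀ m, N ≤ m → mu m = 0) : Finite {T : ℕ × ℕ → ℕ // IsLRFilling lam mu ν T} := by
  refine Finite.of_injective (fun T (c : skewCells lam ν l) =>
      (⟨T.1 c, Nat.lt_succ_of_le (T.2.apply_le hmu c)⟩ : Fin (N + 1)))
    fun T₁ T₂ h => Subtype.ext (funext fun c => ?_)
  by_cases hc : InSkew ν lam c
  · have hc' : c ∈ skewCells lam ν l := by rw [← mem_coe, coe_skewCells hν]; exact hc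
    simpa using congrFun h ⟨c, hc'⟩
  · rw [T₁.2.1 c hc, T₂.2.1 c hc]

lemma two_le_lrCoeff {lam mu ν : ℕ → ℕ} {l N : ℕ} (hν : ∀ i, l ≤ i → ν i = 0)
    (hmu : ∀ m, N ≤ m → mu m = 0) {T₁ T₂ : ℕ × ℕ → ℕ} (h₁ : IsLRFilling lam mu ν T₁)
    (h₂ : IsLRFilling lam mu ν T₂) (hne : T₁ ≠ T₂) : 2 ≤ lrCoeff lam mu ν :=
  have := finite_isLRFilling (lam := lam) hν hmu
  have : Nontrivial {T // IsLRFilling lam mu ν T} :=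
    ⟨⟨⟨T₁, h₁⟩, ⟨T₂, h₂⟩, fun h => hne (congrArg Subtype.val h)⟩⟩
  Finite.one_lt_card

lemma exists_apply_succ_lt_of_lt {α : Type*} [LinearOrder α] {f : ℕ → α} {q p : ℕ}
    (hqp : q ≤ p) (h : f p < f q) : ∃ j, q ≤ j ∧ j < p ∧ f (j + 1) < f j := by
  induction p, hqp using Nat.le_induction with
  | base => exact absurd h (lt_irrefl _)
  | succ p hqp ih =>
    by_cases hp : f (p + 1) < f p
    · exact ⟨p, hqp, p.lt_add_one, hp⟩
    · obtain ⟨j, hqj, hjp, hj⟩ := ih ((not_lt.1 hp).trans_lt h)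
      exact ⟨j, hqj, by omega, hj⟩

lemma exists_le_sum_eq (c : ℕ → ℕ) {l n : ℕ} (h : n ≤ ∑ i ∈ range l, c i) :
    ∃ u ≤ c, (∀ i, l ≤ i → u i = 0) ∧ ∑ i ∈ range l, u i = n := by
  induction l generalizing n with
  | zero => exact ⟨0, fun _ => Nat.zero_le _, fun _ _ => rfl, by simp_all⟩
  | succ l ih =>
    rw [sum_range_succ] at h
    by_cases hn : n ≤ ∑ i ∈ range l, c i
    · obtain ⟨u, hu, hul, hsum⟩ := ih hn
      refine ⟨u, hu, fun i hi => hul i (by omega), ?_⟩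
      rw [sum_range_succ, hsum, hul l le_rfl, add_zero]
    · set s := ∑ i ∈ range l, c i with hs
      refine ⟨fun i => if i < l then c i else if i = l then n - s else 0,
        fun i => ?_, fun i hi => ?_, ?_⟩
      · dsimp only
        split_ifs with h₁ h₂
        · exact le_rfl
        · subst h₂
          omega
        · exact Nat.zero_le _
      · dsimp only
        rw [if_neg (by omega), if_neg (by omega)]
      · rw [sum_range_succ, sum_congr rfl fun i hi => if_pos (mem_range.1 hi), ← hs,
          if_neg (lt_irrefl l), if_pos rfl]
        omega

lemma exists_rowSet {a l x y : ℕ} (ha : 1 ≤ a) (hal : a + 2 ≤ l) (hx : 1 ≤ x) (hxy : x < y)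
    (hyl : y < l) :
    ∃ R : Finset ℕ, R ⊆ Ico 1 l ∧ #R = a + 1 ∧ x ∈ R ∧ y ∈ R ∧
      ∀ i, i + 1 ∈ R → i + 1 ≠ x → i + 1 ≠ y → i ∈ insert 0 R := by
  by_cases hxa : a < x
  · refine ⟨insert x (insert y (Icc 1 (a - 1))), ?_, ?_, by simp, by simp, ?_⟩
    · intro i
      simp only [mem_insert, mem_Icc, mem_Ico]
      omega
    · rw [card_insert_of_notMem (by simp; omega), card_insert_of_notMem (by simp; omega),
        Nat.card_Icc]
      omega
    · intro i
      simp only [mem_insert, mem_Icc]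
      omega
  · refine ⟨insert (max y (a + 1)) (Icc 1 a), ?_, ?_, by simp; omega, by simp; omega, ?_⟩
    · intro i
      simp only [mem_insert, mem_Icc, mem_Ico]
      omega
    · rw [card_insert_of_notMem (by simp), Nat.card_Icc]
      omega
    · intro i
      simp only [mem_insert, mem_Icc]
      omega

def stripRoom (lam : ℕ → ℕ) (k x y : ℕ) : ℕ → ℕ
  | 0 => k - lam 0 - 1
  | i + 1 => lam i - lam (i + 1) - if i + 1 = x ∨ i + 1 = y then 1 else 0

section strip

variable {lam : ℕ → ℕ} {l k x y : ℕ}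

lemma le_sum_stripRoom (hlam : Antitone lam)
    (hcorner : ∀ i, i + 1 = x ∨ i + 1 = y → lam (i + 1) < lam i) (m : ℕ) :
    k ≤ ∑ i ∈ range (m + 1), stripRoom lam k x y i + lam m +
      (if x ≤ m then 1 else 0) + (if y ≤ m then 1 else 0) + 1 := by
  induction m with
  | zero =>
    rw [zero_add, sum_range_one, stripRoom]
    split_ifs <;> omega
  | succ m ih =>
    have := hcorner m
    have : lam (m + 1) ≤ lam m := hlam (by omega)
    rw [sum_range_succ, stripRoom]
    split_ifs at ih ⊢ <;> omega

lemma exists_strip {n : ℕ} (hlam : Antitone lam) (hlast : lam (l - 1) = 0) (hk : lam 0 < k)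
    (hn : n + 3 ≤ k) (hl : 0 < l)
    (hcorner : ∀ i, i + 1 = x ∨ i + 1 = y → lam (i + 1) < lam i) :
    ∃ u : ℕ → ℕ, (∀ i, l ≤ i → u i = 0) ∧ ∑ i ∈ range l, u i = n ∧ lam 0 + u 0 + 1 ≤ k ∧
      ∀ i, lam (i + 1) + u (i + 1) + (if i + 1 = x ∨ i + 1 = y then 1 else 0) ≤ lam i := by
  have hroom := le_sum_stripRoom (k := k) hlam hcorner (l - 1)
  rw [Nat.sub_add_cancel (by omega), hlast] at hroom
  obtain ⟨u, hu, hul, husum⟩ := exists_le_sum_eq (stripRoom lam k x y) (n := n) (l := l)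
    (by split_ifs at hroom <;> omega)
  refine ⟨u, hul, husum, ?_, fun i => ?_⟩
  · have : u 0 ≤ stripRoom lam k x y 0 := hu 0
    rw [stripRoom] at this
    omega
  · have hui : u (i + 1) ≤ stripRoom lam k x y (i + 1) := hu (i + 1)
    have : lam (i + 1) ≤ lam i := hlam (by omega)
    rw [stripRoom] at hui
    by_cases h : i + 1 = x ∨ i + 1 = y
    · have := hcorner i h
      rw [if_pos h] at hui ⊢
      omega
    · rw [if_neg h] at hui ⊢
      omega

end strip

def outerShape (lam u : ℕ → ℕ) (R : Finset ℕ) (i : ℕ) : ℕ :=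
  lam i + u i + if i ∈ insert 0 R then 1 else 0

section outerShape

variable {lam u : ℕ → ℕ} {R : Finset ℕ} {l k x y : ℕ}

lemma outerShape_succ_le
    (hstrip : ∀ i, lam (i + 1) + u (i + 1) + (if i + 1 = x ∨ i + 1 = y then 1 else 0) ≤ lam i)
    (i : ℕ) :
    outerShape lam u R (i + 1) ≤ lam i + if i + 1 ∈ R ∧ i + 1 ≠ x ∧ i + 1 ≠ y then 1 else 0 := by
  have h := hstrip i
  simp only [outerShape, mem_insert, Nat.add_one_ne_zero, false_or]
  by_cases hxy : i + 1 = x ∨ i + 1 = y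
  · rw [if_pos hxy] at h
    rw [if_neg (show ¬(i + 1 ∈ R ∧ i + 1 ≠ x ∧ i + 1 ≠ y) by tauto)]
    split_ifs <;> omega
  · rw [if_neg hxy] at h
    by_cases hiR : i + 1 ∈ R
    · rw [if_pos hiR, if_pos ⟨hiR, fun h => hxy (Or.inl h), fun h => hxy (Or.inr h)⟩]
      omega
    · rw [if_neg hiR, if_neg fun h => hiR h.1]
      omega

lemma inRect_outerShape (hlam : Antitone lam) (hlast : lam (l - 1) = 0) (hR : R ⊆ Ico 1 l)
    (hul : ∀ i, l ≤ i → u i = 0) (hu0 : lam 0 + u 0 + 1 ≤ k)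
    (hstrip : ∀ i, lam (i + 1) + u (i + 1) + (if i + 1 = x ∨ i + 1 = y then 1 else 0) ≤ lam i)
    (hpred : ∀ i, i + 1 ∈ R → i + 1 ≠ x → i + 1 ≠ y → i ∈ insert 0 R) (hl : 0 < l) :
    InRect (outerShape lam u R) l k := by
  have hzero : ∀ i, l ≤ i → outerShape lam u R i = 0 := by
    intro i hi
    have : lam i ≤ lam (l - 1) := hlam (by omega)
    have : i ∉ insert 0 R := by
      simp only [mem_insert, not_or]
      exact ⟨by omega, fun h => by have := mem_Ico.1 (hR h); omega⟩
    simp only [outerShape, hul i hi, if_neg this]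
    omega
  refine ⟨⟨antitone_nat_of_succ_le fun i => ?_, l, hzero⟩, ?_, hzero⟩
  · have h := outerShape_succ_le (R := R) hstrip i
    have hi : lam i + (if i ∈ insert 0 R then 1 else 0) ≤ outerShape lam u R i := by
      simp only [outerShape]
      omega
    split_ifs at h with hi'
    · rw [if_pos (hpred i hi'.1 hi'.2.1 hi'.2.2)] at hi
      omega
    · omega
  · simp only [outerShape, mem_insert_self, if_true]
    omega

lemma sum_outerShape_sub (hR : R ⊆ Ico 1 l) (hl : 0 < l) :
    ∑ i ∈ range l, (outerShape lam u R i - lam i) = ∑ i ∈ range l, u i + #R + 1 := by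
  have h0R : insert 0 R ⊆ range l := by
    intro i hi
    rcases mem_insert.1 hi with rfl | hi
    · exact mem_range.2 hl
    · exact mem_range.2 (mem_Ico.1 (hR hi)).2
  rw [sum_congr rfl fun i _ => show outerShape lam u R i - lam i =
      u i + if i ∈ insert 0 R then 1 else 0 by simp only [outerShape]; omega,
    sum_add_distrib, sum_boole, filter_mem_eq_inter, inter_eq_right.2 h0R,
    card_insert_of_notMem fun h => by have := mem_Ico.1 (hR h); omega, Nat.cast_id, add_assoc]

end outerShape

lemma exists_outer_shape {lam : ℕ → ℕ} {l k n : ℕ} (hlam : Antitone lam)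
    (hlast : lam (l - 1) = 0) (hk : lam 0 < k) (hn : n + 3 ≤ k) {R : Finset ℕ}
    (hR : R ⊆ Ico 1 l) (hl : 0 < l) {x y : ℕ}
    (hcorner : ∀ i, i + 1 = x ∨ i + 1 = y → lam (i + 1) < lam i)
    (hpred : ∀ i, i + 1 ∈ R → i + 1 ≠ x → i + 1 ≠ y → i ∈ insert 0 R) :
    ∃ ν, InRect ν l k ∧ (∀ i, ν (i + 1) ≤ lam i + 1) ∧
      (∀ i, lam i < ν (i + 1) → i + 1 ∈ R ∧ i + 1 ≠ x ∧ i + 1 ≠ y) ∧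
      (∀ i ∈ insert 0 R, lam i < ν i) ∧ ∑ i ∈ range l, (ν i - lam i) = n + #R + 1 := by
  obtain ⟨u, hul, husum, hu0, hstrip⟩ := exists_strip (n := n) hlam hlast hk hn hl hcorner
  refine ⟨outerShape lam u R, inRect_outerShape hlam hlast hR hul hu0 hstrip hpred hl,
    fun i => ?_, fun i hi => ?_, fun i hi => ?_, by rw [sum_outerShape_sub hR hl, husum]⟩
  · have := outerShape_succ_le (R := R) hstrip i
    split_ifs at this <;> omega
  · have := outerShape_succ_le (R := R) hstrip i
    split_ifs at this with h
    · exact h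
    · omega
  · simp only [outerShape, if_pos hi]
    omega

lemma BasicRQ.hook_bounds {lam : ℕ → ℕ} {b a l k : ℕ} (hb : 1 ≤ b)
    (h : BasicRQ lam (hookP b a) l k) : b + 1 ≤ k ∧ a + 2 ≤ l ∧ lam (l - 1) = 0 ∧ lam 0 < k := by
  obtain ⟨⟨⟨hlam, -⟩, -, -⟩, ⟨-, hbk, -⟩, -, hcol, hrow⟩ := h
  simp only [hookP, if_true] at hbk
  simp only [FullCol, FullRow, InLam, InRot, not_forall, not_or, not_lt, not_le, exists_prop]
    at hcol hrow
  obtain ⟨i, hil, -, hi⟩ := hcol (k - 1) (by omega)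
  have hal : a + 2 ≤ l := by
    simp only [hookP] at hi
    split_ifs at hi <;> omega
  obtain ⟨j, hjk, -, hj⟩ := hrow (l - 1) (by omega)
  obtain ⟨i', hi'l, hi', -⟩ := hcol 0 (by omega)
  obtain ⟨j', hj'k, hj', -⟩ := hrow 0 (by omega)
  have : lam (l - 1) ≤ lam i' := hlam i' (l - 1) (by omega)
  simp only [Nat.sub_self, hookP, if_true] at hj
  exact ⟨by omega, hal, by omega, by omega⟩

lemma exists_pos_lt_of_two_le_numPartSizes {lam : ℕ → ℕ} (hlam : Antitone lam)
    (h : 2 ≤ numPartSizes lam) : ∃ i, 0 < lam i ∧ lam i < lam 0 := by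
  unfold numPartSizes at h
  have hfin := Set.finite_of_ncard_pos (show 0 < {n | n ≠ 0 ∧ ∃ i, lam i = n}.ncard by omega)
  obtain ⟨_, ⟨hi, i, rfl⟩, _, ⟨hj, j, rfl⟩, hij⟩ := (Set.one_lt_ncard hfin).1 (by omega)
  rcases lt_or_gt_of_ne hij with hlt | hlt
  · exact ⟨i, Nat.pos_of_ne_zero hi, hlt.trans_le (hlam (Nat.zero_le j))⟩
  · exact ⟨j, Nat.pos_of_ne_zero hj, hlt.trans_le (hlam (Nat.zero_le i))⟩

/-- If `λ ⊆ l × k` has at least two distinct part sizes, `μ = (b, 1^a)` is a hook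
with `b ≥ 2`, `a ≥ 1`, and `(λ, μ, l × k)` is a basic Richardson quadruple, then
some LR coefficient is at least 2. -/
theorem stmt8 (lam : ℕ → ℕ) (b a l k : ℕ)
    (hsize : 2 ≤ numPartSizes lam) (hb : 2 ≤ b) (ha : 1 ≤ a)
    (hbasic : BasicRQ lam (hookP b a) l k) :
    ∃ ν : ℕ → ℕ, InRect ν l k ∧ 2 ≤ lrCoeff lam (hookP b a) ν := by
  have hlam : Antitone lam := hbasic.1.1.1
  obtain ⟨hbk, hal, hlast, hk⟩ := hbasic.hook_bounds (by omega)
  obtain ⟨i₀, hpos, hlt⟩ := exists_pos_lt_of_two_le_numPartSizes hlam hsize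
  have hi₀ : i₀ ≤ l - 1 := not_lt.1 fun h => by have := hlam h.le; omega
  obtain ⟨x, -, hxi, hx⟩ := exists_apply_succ_lt_of_lt (Nat.zero_le i₀) hlt
  obtain ⟨y, hiy, hyl, hy⟩ := exists_apply_succ_lt_of_lt hi₀ (hlast ▸ hpos)
  obtain ⟨R, hRl, hRcard, hxR, hyR, hpred⟩ :=
    exists_rowSet ha hal (Nat.le_add_left 1 x) (by omega : x + 1 < y + 1) (by omega)
  have hcorner : ∀ i, i + 1 = x + 1 ∨ i + 1 = y + 1 → lam (i + 1) < lam i := by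
    rintro i (h | h) <;> obtain rfl := Nat.succ_injective h <;> assumption
  obtain ⟨ν, hν, hover, hstack, hνpos, hsum⟩ :=
    exists_outer_shape hlam hlast hk (n := b - 2) (by omega) hRl (by omega) hcorner hpred
  have hLR : ∀ z ∈ R, (∀ i, lam i < ν (i + 1) → i + 1 ≠ z) →
      IsLRFilling lam (hookP b a) ν (rowFilling lam ν (R.erase z)) := fun z hz hz' =>
    isLRFilling_rowFilling hν.2.2 hover (fun i hi => mem_erase.2 ⟨hz' i hi, (hstack i hi).1⟩)
      (fun s hs => hνpos s (mem_insert_of_mem (mem_of_mem_erase hs)))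
      (hνpos 0 (mem_insert_self 0 R)) (fun h => by simpa using hRl (mem_of_mem_erase h))
      (by rw [card_erase_of_mem hz, hRcard]; rfl) (by rw [hsum, hRcard]; omega)
  exact ⟨ν, hν, two_le_lrCoeff hν.2.2 (fun _ => hookP_eq_zero)
    (hLR _ hxR fun i hi => (hstack i hi).2.1) (hLR _ hyR fun i hi => (hstack i hi).2.2)
    (rowFilling_ne_of_mem_of_notMem (mem_erase.2 ⟨by omega, hyR⟩) (notMem_erase _ _)
      (hνpos _ (mem_insert_of_mem hyR)))⟩
end

section
/- Let λ = (k−1, 2, 1^{ℓ−3}) and μ = ((k−2)^h) with 3 ≤ h ≤ ℓ−2 and k ≥ 5, ℓ ≥ 5, and assume (λ, μ, ℓ×k) is a Richardson quadruple (disjoint placements). Then there exists a partition ν ⊆ ℓ×k with c^ν_{λ,μ} ≥ 2. -/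
/-- The partition `(k-1, 2, 1^{l-3})`. -/
def lamTen (l k : ℕ) : ℕ → ℕ := fun i =>
  if i = 0 then k - 1 else if i = 1 then 2 else if i < l - 1 then 1 else 0

set_option maxHeartbeats 1000000

section aux
def nuT (l k h : ℕ) : ℕ → ℕ := fun i =>
  if i = 0 then k else if i < h then k - 1 else if i = h then k - 2
  else if i < l then 1 else 0

lemma skew_char {l k h : ℕ} (hh : 3 ≤ h) (hh' : h ≤ l - 2) (hk : 5 ≤ k) (hl : 5 ≤ l)
    (c : ℕ × ℕ) :
    InSkew (nuT l k h) (lamTen l k) c ↔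
      (c.1 = 0 ∧ c.2 = k - 1) ∨ (c.1 = 1 ∧ 2 ≤ c.2 ∧ c.2 < k - 1) ∨
      (2 ≤ c.1 ∧ c.1 < h ∧ 1 ≤ c.2 ∧ c.2 < k - 1) ∨
      (c.1 = h ∧ 1 ≤ c.2 ∧ c.2 < k - 2) ∨ (c.1 = l - 1 ∧ c.2 = 0) := by
  obtain ⟨i, j⟩ := c
  simp only [InSkew, nuT, lamTen]
  split_ifs <;> first | exact ‹False›.elim | omega

instance (ν lam : ℕ → ℕ) (c : ℕ × ℕ) : Decidable (InSkew ν lam c) :=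
  inferInstanceAs (Decidable (_ ∧ _))

def val1 (l h : ℕ) (c : ℕ × ℕ) : ℕ :=
  if c.1 = 0 then 1 else if c.1 = l - 1 then h else c.1

def val2 (l k h : ℕ) (c : ℕ × ℕ) : ℕ :=
  if c.2 = 1 then c.1 - 1 else if c.2 = k - 2 then c.1 + 1 else val1 l h c

noncomputable def Tone (l k h : ℕ) : ℕ × ℕ → ℕ := fun c =>
  if InSkew (nuT l k h) (lamTen l k) c then val1 l h c else 0

noncomputable def Ttwo (l k h : ℕ) : ℕ × ℕ → ℕ := fun c =>
  if InSkew (nuT l k h) (lamTen l k) c then val2 l k h c else 0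

lemma Tone_eq {l k h : ℕ} {c} (hc : InSkew (nuT l k h) (lamTen l k) c) :
    Tone l k h c = val1 l h c := by simp only [Tone, if_pos hc]

lemma Ttwo_eq {l k h : ℕ} {c} (hc : InSkew (nuT l k h) (lamTen l k) c) :
    Ttwo l k h c = val2 l k h c := by simp only [Ttwo, if_pos hc]

def seg (r a b : ℕ) : Finset (ℕ × ℕ) := (Finset.Ico a b).image (fun j => (r, j))

lemma mem_seg {r a b : ℕ} {c : ℕ × ℕ} :
    c ∈ seg r a b ↔ c.1 = r ∧ a ≤ c.2 ∧ c.2 < b := by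
  obtain ⟨i, j⟩ := c
  simp only [seg, Finset.mem_image, Finset.mem_Ico, Prod.mk.injEq]
  constructor
  · rintro ⟨x, hx, rfl, rfl⟩; exact ⟨rfl, hx⟩
  · rintro ⟨rfl, hx⟩; exact ⟨j, hx, rfl, rfl⟩

lemma card_seg {r a b : ℕ} : (seg r a b).card = b - a := by
  rw [seg, Finset.card_image_of_injective _ (fun x y hxy => (Prod.mk.injEq _ _ _ _ ▸ hxy).2),
    Nat.card_Ico]

lemma level1 {l k h e : ℕ} :
    {c | InSkew (nuT l k h) (lamTen l k) c ∧ Tone l k h c = e} =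
    {c | InSkew (nuT l k h) (lamTen l k) c ∧ val1 l h c = e} := by
  ext c
  simp only [Set.mem_setOf_eq, and_congr_right_iff]
  intro hs
  rw [Tone_eq hs]

lemma level2 {l k h e : ℕ} :
    {c | InSkew (nuT l k h) (lamTen l k) c ∧ Ttwo l k h c = e} =
    {c | InSkew (nuT l k h) (lamTen l k) c ∧ val2 l k h c = e} := by
  ext c
  simp only [Set.mem_setOf_eq, and_congr_right_iff]
  intro hs
  rw [Ttwo_eq hs]

section counts
variable {l k h : ℕ} (hh : 3 ≤ h) (hh' : h ≤ l - 2) (hk : 5 ≤ k) (hl : 5 ≤ l)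
include hh hh' hk hl

lemma Tone_count0 :
    {c | InSkew (nuT l k h) (lamTen l k) c ∧ Tone l k h c = 1} =
    ↑(insert ((0 : ℕ), k - 1) (seg 1 2 (k - 1))) := by
  rw [level1]
  ext c
  simp only [Set.mem_setOf_eq, Finset.coe_insert, Set.mem_insert_iff, Finset.mem_coe,
    mem_seg, Prod.ext_iff, skew_char hh hh' hk hl, val1]
  split_ifs <;> first | exact ‹False›.elim | omega

lemma Tone_countMid {e : ℕ} (he : 2 ≤ e) (he' : e < h) :
    {c | InSkew (nuT l k h) (lamTen l k) c ∧ Tone l k h c = e} = ↑(seg e 1 (k - 1)) := by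
  rw [level1]
  ext c
  simp only [Set.mem_setOf_eq, Finset.mem_coe, mem_seg, skew_char hh hh' hk hl, val1]
  split_ifs <;> first | exact ‹False›.elim | omega

lemma Tone_countTop :
    {c | InSkew (nuT l k h) (lamTen l k) c ∧ Tone l k h c = h} =
    ↑(insert (l - 1, (0 : ℕ)) (seg h 1 (k - 2))) := by
  rw [level1]
  ext c
  simp only [Set.mem_setOf_eq, Finset.coe_insert, Set.mem_insert_iff, Finset.mem_coe,
    mem_seg, Prod.ext_iff, skew_char hh hh' hk hl, val1]
  split_ifs <;> first | exact ‹False›.elim | omega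

lemma Tone_countHigh {e : ℕ} (he : h < e) :
    {c | InSkew (nuT l k h) (lamTen l k) c ∧ Tone l k h c = e} = (∅ : Set (ℕ × ℕ)) := by
  rw [level1]
  ext c
  simp only [Set.mem_setOf_eq, Set.mem_empty_iff_false, iff_false, not_and,
    skew_char hh hh' hk hl, val1]
  split_ifs <;> first | exact ‹False›.elim | omega

lemma Ttwo_count0 :
    {c | InSkew (nuT l k h) (lamTen l k) c ∧ Ttwo l k h c = 1} =
    ↑(insert ((0 : ℕ), k - 1) (insert ((2 : ℕ), (1 : ℕ)) (seg 1 2 (k - 2)))) := by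
  rw [level2]
  ext c
  simp only [Set.mem_setOf_eq, Finset.coe_insert, Set.mem_insert_iff, Finset.mem_coe,
    mem_seg, Prod.ext_iff, skew_char hh hh' hk hl, val2, val1]
  split_ifs <;> first | exact ‹False›.elim | omega

lemma Ttwo_countMid {e : ℕ} (he : 2 ≤ e) (he' : e < h) :
    {c | InSkew (nuT l k h) (lamTen l k) c ∧ Ttwo l k h c = e} =
    ↑(insert (e + 1, (1 : ℕ)) (insert (e - 1, k - 2) (seg e 2 (k - 2)))) := by
  rw [level2]
  ext c
  simp only [Set.mem_setOf_eq, Finset.coe_insert, Set.mem_insert_iff, Finset.mem_coe,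
    mem_seg, Prod.ext_iff, skew_char hh hh' hk hl, val2, val1]
  split_ifs <;> first | exact ‹False›.elim | omega

lemma Ttwo_countTop :
    {c | InSkew (nuT l k h) (lamTen l k) c ∧ Ttwo l k h c = h} =
    ↑(insert (l - 1, (0 : ℕ)) (insert (h - 1, k - 2) (seg h 2 (k - 2)))) := by
  rw [level2]
  ext c
  simp only [Set.mem_setOf_eq, Finset.coe_insert, Set.mem_insert_iff, Finset.mem_coe,
    mem_seg, Prod.ext_iff, skew_char hh hh' hk hl, val2, val1]
  split_ifs <;> first | exact ‹False›.elim | omega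

lemma Ttwo_countHigh {e : ℕ} (he : h < e) :
    {c | InSkew (nuT l k h) (lamTen l k) c ∧ Ttwo l k h c = e} = (∅ : Set (ℕ × ℕ)) := by
  rw [level2]
  ext c
  simp only [Set.mem_setOf_eq, Set.mem_empty_iff_false, iff_false, not_and,
    skew_char hh hh' hk hl, val2, val1]
  split_ifs <;> first | exact ‹False›.elim | omega

end counts

lemma skew_finite {l k h : ℕ} (hh : 3 ≤ h) (hh' : h ≤ l - 2) (hk : 5 ≤ k) (hl : 5 ≤ l) :
    {c | InSkew (nuT l k h) (lamTen l k) c}.Finite := by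
  apply Set.Finite.subset (Finset.range l ×ˢ Finset.range k).finite_toSet
  intro c hc
  rw [Set.mem_setOf_eq, skew_char hh hh' hk hl] at hc
  simp only [Finset.coe_product, Set.mem_prod, Finset.mem_coe, Finset.mem_range]
  omega

/-- Ballot condition from a global row-decreasing injection for each letter. -/
lemma ballot_of_inj {ν lam : ℕ → ℕ} {T : ℕ × ℕ → ℕ}
    (hfin : ∀ m : ℕ, {c | InSkew ν lam c ∧ T c = m}.Finite)
    (φ : ℕ → ℕ × ℕ → ℕ × ℕ)
    (hmap : ∀ m, 1 ≤ m → ∀ c, InSkew ν lam c → T c = m + 1 →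
      InSkew ν lam (φ m c) ∧ T (φ m c) = m ∧ (φ m c).1 < c.1)
    (hinj : ∀ m, 1 ≤ m → Set.InjOn (φ m) {c | InSkew ν lam c ∧ T c = m + 1}) :
    ∀ c, InSkew ν lam c → ∀ m, 1 ≤ m →
      {c' | InSkew ν lam c' ∧ (ReadBefore c' c ∨ c' = c) ∧ T c' = m + 1}.ncard ≤
      {c' | InSkew ν lam c' ∧ (ReadBefore c' c ∨ c' = c) ∧ T c' = m}.ncard := by
  intro c _ m hm
  have hsub1 : {c' | InSkew ν lam c' ∧ (ReadBefore c' c ∨ c' = c) ∧ T c' = m + 1} ⊆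
      {c' | InSkew ν lam c' ∧ T c' = m + 1} := fun a ha => ⟨ha.1, ha.2.2⟩
  have hsub2 : {c' | InSkew ν lam c' ∧ (ReadBefore c' c ∨ c' = c) ∧ T c' = m} ⊆
      {c' | InSkew ν lam c' ∧ T c' = m} := fun a ha => ⟨ha.1, ha.2.2⟩
  apply Set.ncard_le_ncard_of_injOn (φ m) ?_ ((hinj m hm).mono hsub1) ((hfin m).subset hsub2)
  rintro a ⟨ha, hrb, hta⟩
  obtain ⟨h1, h2, h3⟩ := hmap m hm a ha hta
  refine ⟨h1, Or.inl (Or.inl ?_), h2⟩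
  have : a.1 ≤ c.1 := by
    rcases hrb with (h | h) | rfl
    · exact le_of_lt h
    · exact le_of_eq h.1
    · exact le_refl _
  exact lt_of_lt_of_le h3 this

def phi1 (l k h : ℕ) (c : ℕ × ℕ) : ℕ × ℕ :=
  (if c.1 = l - 1 ∧ c.2 = 0 then h - 1 else if c.1 = 2 ∧ c.2 = 1 then 0 else c.1 - 1,
   if c.1 = l - 1 ∧ c.2 = 0 then k - 2 else if c.1 = 2 ∧ c.2 = 1 then k - 1 else c.2)

def phi2 (l k h : ℕ) (c : ℕ × ℕ) : ℕ × ℕ :=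
  (if c.1 = l - 1 ∧ c.2 = 0 then h else if c.1 = 1 ∧ c.2 = k - 2 then 0 else c.1 - 1,
   if c.1 = l - 1 ∧ c.2 = 0 then 1 else if c.1 = 1 ∧ c.2 = k - 2 then k - 1 else c.2)

section maps
variable {l k h : ℕ} (hh : 3 ≤ h) (hh' : h ≤ l - 2) (hk : 5 ≤ k) (hl : 5 ≤ l)
include hh hh' hk hl

lemma hmap1 : ∀ m, 1 ≤ m → ∀ c, InSkew (nuT l k h) (lamTen l k) c →
    Tone l k h c = m + 1 →
    InSkew (nuT l k h) (lamTen l k) (phi1 l k h c) ∧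
      Tone l k h (phi1 l k h c) = m ∧ (phi1 l k h c).1 < c.1 := by
  intro m hm c hc ht
  rw [Tone_eq hc] at ht
  rw [skew_char hh hh' hk hl] at hc
  obtain ⟨i, j⟩ := c
  (try dsimp only at hc ⊢)
  have ht' : (i = 0 ∧ 1 = m + 1) ∨ (i ≠ 0 ∧ i = l - 1 ∧ h = m + 1) ∨
      (i ≠ 0 ∧ i ≠ l - 1 ∧ i = m + 1) := by
    simp only [val1] at ht; (try dsimp only at ht); split_ifs at ht <;> first | exact ‹False›.elim | omega
  simp only [phi1]
  (try dsimp only)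
  split_ifs with h1 h2
  · have hs : InSkew (nuT l k h) (lamTen l k) (h - 1, k - 2) := by
      rw [skew_char hh hh' hk hl]; (try dsimp only); omega
    refine ⟨hs, ?_, by (try dsimp only); omega⟩
    rw [Tone_eq hs]; simp only [val1]; (try dsimp only); split_ifs <;> first | exact ‹False›.elim | omega
  · have hs : InSkew (nuT l k h) (lamTen l k) (0, k - 1) := by
      rw [skew_char hh hh' hk hl]; (try dsimp only); omega
    refine ⟨hs, ?_, by (try dsimp only); omega⟩
    rw [Tone_eq hs]; simp only [val1]; (try dsimp only); split_ifs <;> first | exact ‹False›.elim | omega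
  · have hs : InSkew (nuT l k h) (lamTen l k) (i - 1, j) := by
      rw [skew_char hh hh' hk hl]; (try dsimp only); omega
    refine ⟨hs, ?_, by (try dsimp only); omega⟩
    rw [Tone_eq hs]; simp only [val1]; (try dsimp only); split_ifs <;> first | exact ‹False›.elim | omega

lemma hinj1 : ∀ m, 1 ≤ m → Set.InjOn (phi1 l k h)
    {c | InSkew (nuT l k h) (lamTen l k) c ∧ Tone l k h c = m + 1} := by
  intro m hm a ha b hb hab
  obtain ⟨hsa, hta⟩ := ha
  obtain ⟨hsb, htb⟩ := hb
  rw [Tone_eq hsa] at hta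
  rw [Tone_eq hsb] at htb
  rw [skew_char hh hh' hk hl] at hsa hsb
  obtain ⟨i, j⟩ := a
  obtain ⟨i', j'⟩ := b
  (try dsimp only at hsa hsb)
  have hta' : (i = 0 ∧ 1 = m + 1) ∨ (i ≠ 0 ∧ i = l - 1 ∧ h = m + 1) ∨
      (i ≠ 0 ∧ i ≠ l - 1 ∧ i = m + 1) := by
    simp only [val1] at hta; (try dsimp only at hta); split_ifs at hta <;> first | exact ‹False›.elim | omega
  have htb' : (i' = 0 ∧ 1 = m + 1) ∨ (i' ≠ 0 ∧ i' = l - 1 ∧ h = m + 1) ∨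
      (i' ≠ 0 ∧ i' ≠ l - 1 ∧ i' = m + 1) := by
    simp only [val1] at htb; (try dsimp only at htb); split_ifs at htb <;> first | exact ‹False›.elim | omega
  simp only [phi1] at hab
  rw [Prod.mk.injEq] at hab
  rw [Prod.mk.injEq]
  (try dsimp only at hab)
  split_ifs at hab <;> first | exact ‹False›.elim | omega

lemma hmap2 : ∀ m, 1 ≤ m → ∀ c, InSkew (nuT l k h) (lamTen l k) c →
    Ttwo l k h c = m + 1 →
    InSkew (nuT l k h) (lamTen l k) (phi2 l k h c) ∧
      Ttwo l k h (phi2 l k h c) = m ∧ (phi2 l k h c).1 < c.1 := by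
  intro m hm c hc ht
  rw [Ttwo_eq hc] at ht
  rw [skew_char hh hh' hk hl] at hc
  obtain ⟨i, j⟩ := c
  (try dsimp only at hc ⊢)
  have ht' : (j = 1 ∧ i - 1 = m + 1) ∨ (j ≠ 1 ∧ j = k - 2 ∧ i + 1 = m + 1) ∨
      (j ≠ 1 ∧ j ≠ k - 2 ∧ ((i = 0 ∧ 1 = m + 1) ∨ (i ≠ 0 ∧ i = l - 1 ∧ h = m + 1) ∨
        (i ≠ 0 ∧ i ≠ l - 1 ∧ i = m + 1))) := by
    simp only [val2, val1] at ht; (try dsimp only at ht); split_ifs at ht <;> first | exact ‹False›.elim | omega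
  simp only [phi2]
  (try dsimp only)
  split_ifs with h1 h2
  · have hs : InSkew (nuT l k h) (lamTen l k) (h, 1) := by
      rw [skew_char hh hh' hk hl]; (try dsimp only); omega
    refine ⟨hs, ?_, by (try dsimp only); omega⟩
    rw [Ttwo_eq hs]; simp only [val2, val1]; (try dsimp only); split_ifs <;> first | exact ‹False›.elim | omega
  · have hs : InSkew (nuT l k h) (lamTen l k) (0, k - 1) := by
      rw [skew_char hh hh' hk hl]; (try dsimp only); omega
    refine ⟨hs, ?_, by (try dsimp only); omega⟩
    rw [Ttwo_eq hs]; simp only [val2, val1]; (try dsimp only); split_ifs <;> first | exact ‹False›.elim | omega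
  · have hs : InSkew (nuT l k h) (lamTen l k) (i - 1, j) := by
      rw [skew_char hh hh' hk hl]; (try dsimp only); omega
    refine ⟨hs, ?_, by (try dsimp only); omega⟩
    rw [Ttwo_eq hs]; simp only [val2, val1]; (try dsimp only); split_ifs <;> first | exact ‹False›.elim | omega

lemma hinj2 : ∀ m, 1 ≤ m → Set.InjOn (phi2 l k h)
    {c | InSkew (nuT l k h) (lamTen l k) c ∧ Ttwo l k h c = m + 1} := by
  intro m hm a ha b hb hab
  obtain ⟨hsa, hta⟩ := ha
  obtain ⟨hsb, htb⟩ := hb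
  rw [Ttwo_eq hsa] at hta
  rw [Ttwo_eq hsb] at htb
  rw [skew_char hh hh' hk hl] at hsa hsb
  obtain ⟨i, j⟩ := a
  obtain ⟨i', j'⟩ := b
  (try dsimp only at hsa hsb)
  have hta' : (j = 1 ∧ i - 1 = m + 1) ∨ (j ≠ 1 ∧ j = k - 2 ∧ i + 1 = m + 1) ∨
      (j ≠ 1 ∧ j ≠ k - 2 ∧ ((i = 0 ∧ 1 = m + 1) ∨ (i ≠ 0 ∧ i = l - 1 ∧ h = m + 1) ∨
        (i ≠ 0 ∧ i ≠ l - 1 ∧ i = m + 1))) := by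
    simp only [val2, val1] at hta; (try dsimp only at hta); split_ifs at hta <;> first | exact ‹False›.elim | omega
  have htb' : (j' = 1 ∧ i' - 1 = m + 1) ∨ (j' ≠ 1 ∧ j' = k - 2 ∧ i' + 1 = m + 1) ∨
      (j' ≠ 1 ∧ j' ≠ k - 2 ∧ ((i' = 0 ∧ 1 = m + 1) ∨ (i' ≠ 0 ∧ i' = l - 1 ∧ h = m + 1) ∨
        (i' ≠ 0 ∧ i' ≠ l - 1 ∧ i' = m + 1))) := by
    simp only [val2, val1] at htb; (try dsimp only at htb); split_ifs at htb <;> first | exact ‹False›.elim | omega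
  simp only [phi2] at hab
  rw [Prod.mk.injEq] at hab
  rw [Prod.mk.injEq]
  (try dsimp only at hab)
  split_ifs at hab <;> first | exact ‹False›.elim | omega

end maps

section ssyt
variable {l k h : ℕ} (hh : 3 ≤ h) (hh' : h ≤ l - 2) (hk : 5 ≤ k) (hl : 5 ≤ l)
include hh hh' hk hl

lemma Tone_pos : ∀ c, InSkew (nuT l k h) (lamTen l k) c → 1 ≤ Tone l k h c := by
  intro c hc
  rw [Tone_eq hc]
  rw [skew_char hh hh' hk hl] at hc
  obtain ⟨i, j⟩ := c
  simp only [val1]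
  (try dsimp only at hc ⊢)
  split_ifs <;> first | exact ‹False›.elim | omega

lemma Ttwo_pos : ∀ c, InSkew (nuT l k h) (lamTen l k) c → 1 ≤ Ttwo l k h c := by
  intro c hc
  rw [Ttwo_eq hc]
  rw [skew_char hh hh' hk hl] at hc
  obtain ⟨i, j⟩ := c
  simp only [val2, val1]
  (try dsimp only at hc ⊢)
  split_ifs <;> first | exact ‹False›.elim | omega

lemma Tone_rows : ∀ i j j', InSkew (nuT l k h) (lamTen l k) (i, j) →
    InSkew (nuT l k h) (lamTen l k) (i, j') → j ≤ j' →
    Tone l k h (i, j) ≤ Tone l k h (i, j') := by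
  intro i j j' h1 h2 hjj
  rw [Tone_eq h1, Tone_eq h2]
  rw [skew_char hh hh' hk hl] at h1 h2
  simp only [val1]
  (try dsimp only at h1 h2 ⊢)
  split_ifs <;> first | exact ‹False›.elim | omega

lemma Ttwo_rows : ∀ i j j', InSkew (nuT l k h) (lamTen l k) (i, j) →
    InSkew (nuT l k h) (lamTen l k) (i, j') → j ≤ j' →
    Ttwo l k h (i, j) ≤ Ttwo l k h (i, j') := by
  intro i j j' h1 h2 hjj
  rw [Ttwo_eq h1, Ttwo_eq h2]
  rw [skew_char hh hh' hk hl] at h1 h2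
  simp only [val2, val1]
  (try dsimp only at h1 h2 ⊢)
  split_ifs <;> first | exact ‹False›.elim | omega

lemma Tone_cols : ∀ i j, InSkew (nuT l k h) (lamTen l k) (i, j) →
    InSkew (nuT l k h) (lamTen l k) (i + 1, j) →
    Tone l k h (i, j) < Tone l k h (i + 1, j) := by
  intro i j h1 h2
  rw [Tone_eq h1, Tone_eq h2]
  rw [skew_char hh hh' hk hl] at h1 h2
  simp only [val1]
  (try dsimp only at h1 h2 ⊢)
  split_ifs <;> first | exact ‹False›.elim | omega

lemma Ttwo_cols : ∀ i j, InSkew (nuT l k h) (lamTen l k) (i, j) →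
    InSkew (nuT l k h) (lamTen l k) (i + 1, j) →
    Ttwo l k h (i, j) < Ttwo l k h (i + 1, j) := by
  intro i j h1 h2
  rw [Ttwo_eq h1, Ttwo_eq h2]
  rw [skew_char hh hh' hk hl] at h1 h2
  simp only [val2, val1]
  (try dsimp only at h1 h2 ⊢)
  split_ifs <;> first | exact ‹False›.elim | omega

lemma Tone_content : ∀ m, {c | InSkew (nuT l k h) (lamTen l k) c ∧ Tone l k h c = m + 1}.Finite ∧
    {c | InSkew (nuT l k h) (lamTen l k) c ∧ Tone l k h c = m + 1}.ncard = rectP (k - 2) h m := by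
  intro m
  by_cases hm0 : m = 0
  · subst hm0
    rw [Tone_count0 hh hh' hk hl]
    refine ⟨Finset.finite_toSet _, ?_⟩
    rw [Set.ncard_coe_finset,
      Finset.card_insert_of_notMem (by simp only [mem_seg]; (try dsimp only); omega), card_seg]
    simp only [rectP]
    split_ifs <;> first | exact ‹False›.elim | omega
  · by_cases hmid : m + 1 < h
    · rw [Tone_countMid hh hh' hk hl (by omega) hmid]
      refine ⟨Finset.finite_toSet _, ?_⟩
      rw [Set.ncard_coe_finset, card_seg]
      simp only [rectP]
      split_ifs <;> first | exact ‹False›.elim | omega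
    · by_cases htop : m + 1 = h
      · rw [htop, Tone_countTop hh hh' hk hl]
        refine ⟨Finset.finite_toSet _, ?_⟩
        rw [Set.ncard_coe_finset,
          Finset.card_insert_of_notMem (by simp only [mem_seg]; (try dsimp only); omega), card_seg]
        simp only [rectP]
        split_ifs <;> first | exact ‹False›.elim | omega
      · rw [Tone_countHigh hh hh' hk hl (by omega : h < m + 1)]
        refine ⟨Set.finite_empty, ?_⟩
        rw [Set.ncard_empty]
        simp only [rectP]
        split_ifs <;> first | exact ‹False›.elim | omega

lemma Ttwo_content : ∀ m, {c | InSkew (nuT l k h) (lamTen l k) c ∧ Ttwo l k h c = m + 1}.Finite ∧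
    {c | InSkew (nuT l k h) (lamTen l k) c ∧ Ttwo l k h c = m + 1}.ncard = rectP (k - 2) h m := by
  intro m
  by_cases hm0 : m = 0
  · subst hm0
    rw [Ttwo_count0 hh hh' hk hl]
    refine ⟨Finset.finite_toSet _, ?_⟩
    rw [Set.ncard_coe_finset,
      Finset.card_insert_of_notMem
        (by simp only [Finset.mem_insert, mem_seg, Prod.mk.injEq]; (try dsimp only); omega),
      Finset.card_insert_of_notMem (by simp only [mem_seg]; (try dsimp only); omega), card_seg]
    simp only [rectP]
    split_ifs <;> first | exact ‹False›.elim | omega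
  · by_cases hmid : m + 1 < h
    · rw [Ttwo_countMid hh hh' hk hl (by omega) hmid]
      refine ⟨Finset.finite_toSet _, ?_⟩
      rw [Set.ncard_coe_finset,
        Finset.card_insert_of_notMem
          (by simp only [Finset.mem_insert, mem_seg, Prod.mk.injEq]; (try dsimp only); omega),
        Finset.card_insert_of_notMem (by simp only [mem_seg]; (try dsimp only); omega), card_seg]
      simp only [rectP]
      split_ifs <;> first | exact ‹False›.elim | omega
    · by_cases htop : m + 1 = h
      · rw [htop, Ttwo_countTop hh hh' hk hl]
        refine ⟨Finset.finite_toSet _, ?_⟩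
        rw [Set.ncard_coe_finset,
          Finset.card_insert_of_notMem
            (by simp only [Finset.mem_insert, mem_seg, Prod.mk.injEq]; (try dsimp only); omega),
          Finset.card_insert_of_notMem (by simp only [mem_seg]; (try dsimp only); omega), card_seg]
        simp only [rectP]
        split_ifs <;> first | exact ‹False›.elim | omega
      · rw [Ttwo_countHigh hh hh' hk hl (by omega : h < m + 1)]
        refine ⟨Set.finite_empty, ?_⟩
        rw [Set.ncard_empty]
        simp only [rectP]
        split_ifs <;> first | exact ‹False›.elim | omega

lemma Tone_isLR : IsLRFilling (lamTen l k) (rectP (k - 2) h) (nuT l k h) (Tone l k h) := by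
  refine ⟨fun c hc => if_neg hc, Tone_pos hh hh' hk hl, Tone_rows hh hh' hk hl,
    Tone_cols hh hh' hk hl, Tone_content hh hh' hk hl, ?_⟩
  exact ballot_of_inj
    (fun m => (skew_finite hh hh' hk hl).subset (fun c hc => hc.1))
    (fun _ => phi1 l k h) (hmap1 hh hh' hk hl) (hinj1 hh hh' hk hl)

lemma Ttwo_isLR : IsLRFilling (lamTen l k) (rectP (k - 2) h) (nuT l k h) (Ttwo l k h) := by
  refine ⟨fun c hc => if_neg hc, Ttwo_pos hh hh' hk hl, Ttwo_rows hh hh' hk hl,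
    Ttwo_cols hh hh' hk hl, Ttwo_content hh hh' hk hl, ?_⟩
  exact ballot_of_inj
    (fun m => (skew_finite hh hh' hk hl).subset (fun c hc => hc.1))
    (fun _ => phi2 l k h) (hmap2 hh hh' hk hl) (hinj2 hh hh' hk hl)

lemma Tone_ne_Ttwo : Tone l k h ≠ Ttwo l k h := by
  intro heq
  have hs : InSkew (nuT l k h) (lamTen l k) (2, k - 2) := by
    rw [skew_char hh hh' hk hl]; (try dsimp only); omega
  have := congrFun heq (2, k - 2)
  rw [Tone_eq hs, Ttwo_eq hs] at this
  simp only [val1, val2] at this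
  (try dsimp only at this)
  split_ifs at this <;> first | exact ‹False›.elim | omega

lemma nuT_inRect : InRect (nuT l k h) l k := by
  refine ⟨⟨fun i j hij => ?_, ⟨l, fun i hi => ?_⟩⟩, ?_, fun i hi => ?_⟩ <;>
    simp only [nuT] <;> split_ifs <;> first | exact ‹False›.elim | omega

end ssyt

lemma fillings_finite (lam mu ν : ℕ → ℕ) (L K B : ℕ)
    (hνK : ∀ i, ν i ≤ K) (hνL : ∀ i, L ≤ i → ν i = 0) (hmu : ∀ m, B ≤ m → mu m = 0) :
    Finite {T : ℕ × ℕ → ℕ // IsLRFilling lam mu ν T} := by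
  classical
  have hbound : ∀ T : ℕ × ℕ → ℕ, IsLRFilling lam mu ν T → ∀ c, T c ≤ B := by
    rintro T ⟨h0, h1, h2, h3, hcont, h5⟩ c
    by_contra hB
    push_neg at hB
    have hsk : InSkew ν lam c := by
      by_contra hn
      rw [h0 c hn] at hB
      omega
    obtain ⟨hfin, hcard⟩ := hcont (T c - 1)
    have he : {c' | InSkew ν lam c' ∧ T c' = T c - 1 + 1} = ∅ := by
      rw [← Set.ncard_eq_zero hfin, hcard, hmu _ (by omega)]
    have hcmem : c ∈ {c' | InSkew ν lam c' ∧ T c' = T c - 1 + 1} := ⟨hsk, by omega⟩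
    rw [he] at hcmem
    exact hcmem
  have hinj : Function.Injective (fun T : {T : ℕ × ℕ → ℕ // IsLRFilling lam mu ν T} =>
      (fun p : Fin L × Fin K =>
        (⟨T.1 (p.1.1, p.2.1), Nat.lt_succ_of_le (hbound T.1 T.2 _)⟩ : Fin (B + 1)))) := by
    intro T T' hTT
    ext1
    funext c
    by_cases hcs : c.1 < L ∧ c.2 < K
    · have := congrFun hTT (⟨c.1, hcs.1⟩, ⟨c.2, hcs.2⟩)
      simp only [Fin.mk.injEq] at this
      simpa using this
    · have hns : ¬ InSkew ν lam c := by
        rintro ⟨hle, hlt⟩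
        have hν0 : ν c.1 ≠ 0 := by omega
        have hc1 : c.1 < L := by
          by_contra hcL
          exact hν0 (hνL _ (le_of_not_gt hcL))
        have hc2 : c.2 < K := lt_of_lt_of_le hlt (hνK _)
        exact hcs ⟨hc1, hc2⟩
      rw [T.2.1 c hns, T'.2.1 c hns]
  exact Finite.of_injective _ hinj


end aux

/-- For `λ = (k-1, 2, 1^{l-3})` and `μ = ((k-2)^h)` with `3 ≤ h ≤ l-2`, `k,l ≥ 5`
and disjoint placements, some LR coefficient is at least 2. -/
theorem stmt10 (l k h : ℕ) (hh : 3 ≤ h) (hh' : h ≤ l - 2)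
    (hk : 5 ≤ k) (hl : 5 ≤ l)
    (hdisj : DisjointPlace (lamTen l k) (rectP (k - 2) h) l k) :
    ∃ ν : ℕ → ℕ, InRect ν l k ∧ 2 ≤ lrCoeff (lamTen l k) (rectP (k - 2) h) ν := by
  refine ⟨nuT l k h, nuT_inRect hh hh' hk hl, ?_⟩
  haveI hFin : Finite {T : ℕ × ℕ → ℕ // IsLRFilling (lamTen l k) (rectP (k - 2) h) (nuT l k h) T} :=
    fillings_finite _ _ _ l k h
      (fun i => by simp only [nuT]; split_ifs <;> omega)
      (fun i hi => by simp only [nuT]; split_ifs <;> omega)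
      (fun m hm => by simp only [rectP]; split_ifs <;> omega)
  haveI hNt : Nontrivial
      {T : ℕ × ℕ → ℕ // IsLRFilling (lamTen l k) (rectP (k - 2) h) (nuT l k h) T} :=
    ⟨⟨Tone l k h, Tone_isLR hh hh' hk hl⟩, ⟨Ttwo l k h, Ttwo_isLR hh hh' hk hl⟩,
      fun hEq => Tone_ne_Ttwo hh hh' hk hl (congrArg Subtype.val hEq)⟩
  have := Finite.one_lt_card
    (α := {T : ℕ × ℕ → ℕ // IsLRFilling (lamTen l k) (rectP (k - 2) h) (nuT l k h) T})
  unfold lrCoeff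
  omega
end

section
/- (Stembridge's classification, multiplicity-free direction for rectangles.) If μ = (g^h) ⊆ ℓ×k is a rectangle whose placement at the bottom-right of ℓ×k is at distance exactly one unit from the top edge (i.e., h = ℓ−1), then for any partition λ ⊆ ℓ×k, every coefficient c^ν_{λ,μ} with ν ⊆ ℓ×k is at most 1. -/
namespace Stmt14

lemma rb_asymm {c' c : ℕ × ℕ} (h1 : ReadBefore c' c) (h2 : ReadBefore c c') : False := by
  rcases c with ⟨a, b⟩; rcases c' with ⟨x, y⟩
  simp only [ReadBefore] at h1 h2; omega

lemma rb_trans {a b c : ℕ × ℕ} (h1 : ReadBefore a b) (h2 : ReadBefore b c) :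
    ReadBefore a c := by
  rcases a with ⟨a1, a2⟩; rcases b with ⟨b1, b2⟩; rcases c with ⟨c1, c2⟩
  simp only [ReadBefore] at *; omega

lemma rb_tri (a b : ℕ × ℕ) : a = b ∨ ReadBefore a b ∨ ReadBefore b a := by
  rcases a with ⟨a1, a2⟩; rcases b with ⟨b1, b2⟩
  simp only [ReadBefore, Prod.mk.injEq]; omega

lemma exists_rb_max {S : Set (ℕ × ℕ)} (hfin : S.Finite) :
    S.Nonempty → ∃ m ∈ S, ∀ b ∈ S, b = m ∨ ReadBefore b m := by
  refine Set.Finite.induction_on (motive := fun S _ => S.Nonempty → ∃ m ∈ S, ∀ b ∈ S, b = m ∨ ReadBefore b m) S hfin ?_ ?_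
  · rintro ⟨x, hx⟩; exact absurd hx (Set.notMem_empty x)
  · rintro a s ha hsf ih -
    rcases s.eq_empty_or_nonempty with rfl | hs
    · refine ⟨a, Set.mem_insert _ _, ?_⟩
      rintro b (rfl | hb)
      · exact Or.inl rfl
      · exact absurd hb (Set.notMem_empty b)
    · obtain ⟨m, hm, hmax⟩ := ih hs
      rcases rb_tri a m with rfl | hrb | hrb
      · exact ⟨a, Set.mem_insert _ _, by rintro b (rfl | hb); exacts [Or.inl rfl, hmax b hb]⟩
      · refine ⟨m, Set.mem_insert_of_mem _ hm, ?_⟩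
        rintro b (rfl | hb)
        · exact Or.inr hrb
        · exact hmax b hb
      · refine ⟨a, Set.mem_insert _ _, ?_⟩
        rintro b (rfl | hb)
        · exact Or.inl rfl
        · rcases hmax b hb with rfl | h2
          · exact Or.inr hrb
          · exact Or.inr (rb_trans h2 hrb)

variable {g l k : ℕ} {lam mu ν : ℕ → ℕ} {T : ℕ × ℕ → ℕ}

lemma val_fin (hT : IsLRFilling lam mu ν T) {v : ℕ} (hv : 1 ≤ v) :
    {c | InSkew ν lam c ∧ T c = v}.Finite := by
  have h := (hT.2.2.2.2.1 (v - 1)).1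
  have hrw : v - 1 + 1 = v := by omega
  rwa [hrw] at h

lemma val_card (hT : IsLRFilling lam mu ν T) {v : ℕ} (hv : 1 ≤ v) :
    {c | InSkew ν lam c ∧ T c = v}.ncard = mu (v - 1) := by
  have h := (hT.2.2.2.2.1 (v - 1)).2
  have hrw : v - 1 + 1 = v := by omega
  rwa [hrw] at h

lemma val_ne (hT : IsLRFilling lam mu ν T) {c : ℕ × ℕ} (hc : InSkew ν lam c)
    (h0 : mu (T c - 1) = 0) : False := by
  have h1 : 1 ≤ T c := hT.2.1 c hc
  have hfin := val_fin hT h1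
  have hcard := val_card hT h1
  rw [h0, Set.ncard_eq_zero hfin] at hcard
  have hmem : c ∈ {c' | InSkew ν lam c' ∧ T c' = T c} := ⟨hc, rfl⟩
  rw [hcard] at hmem
  exact hmem

/-- Lemma A: entries are bounded above by the row index plus one. -/
lemma upper (hT : IsLRFilling lam mu ν T) :
    ∀ i j, InSkew ν lam (i, j) → T (i, j) ≤ i + 1 := by
  intro i
  induction i using Nat.strong_induction_on with
  | _ i ih =>
  intro j hc
  by_contra hgt
  push_neg at hgt
  have h1 : 1 ≤ T (i, j) := hT.2.1 _ hc
  have hball := hT.2.2.2.2.2 (i, j) hc (T (i, j) - 1) (by omega)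
  have hrw : T (i, j) - 1 + 1 = T (i, j) := by omega
  rw [hrw] at hball
  have hfinL : {c' | InSkew ν lam c' ∧ (ReadBefore c' (i, j) ∨ c' = (i, j)) ∧
      T c' = T (i, j)}.Finite :=
    (val_fin hT h1).subset (fun x hx => ⟨hx.1, hx.2.2⟩)
  have hmem : (i, j) ∈ {c' | InSkew ν lam c' ∧ (ReadBefore c' (i, j) ∨ c' = (i, j)) ∧
      T c' = T (i, j)} := ⟨hc, Or.inr rfl, rfl⟩
  have hpos : 0 < {c' | InSkew ν lam c' ∧ (ReadBefore c' (i, j) ∨ c' = (i, j)) ∧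
      T c' = T (i, j)}.ncard := (Set.ncard_pos hfinL).2 ⟨_, hmem⟩
  have hne0 : {c' | InSkew ν lam c' ∧ (ReadBefore c' (i, j) ∨ c' = (i, j)) ∧
      T c' = T (i, j) - 1}.ncard ≠ 0 := by omega
  obtain ⟨⟨x, y⟩, hsk', hbef, hval⟩ := Set.nonempty_of_ncard_ne_zero hne0
  rcases hbef with hrb | heq
  · have hrb' : x < i ∨ (x = i ∧ j < y) := hrb
    rcases hrb' with hlt | ⟨rfl, hgt2⟩
    · have h2 : T (x, y) ≤ x + 1 := ih x hlt y hsk'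
      omega
    · have hmono : T (x, j) ≤ T (x, y) := hT.2.2.1 x j y hc hsk' (by omega)
      omega
  · rw [heq] at hval
    omega

/-- Lemma B: below any entry `e < h` (with rectangular content `g^h`, `g ≥ 1`)
there is an entry `e+1` in a strictly lower row. -/
lemma exists_succ {h : ℕ} (hT : IsLRFilling lam (rectP g h) ν T) (hg : 1 ≤ g)
    {c : ℕ × ℕ} (hc : InSkew ν lam c) (hlt : T c < h) :
    ∃ c', InSkew ν lam c' ∧ c.1 < c'.1 ∧ T c' = T c + 1 := by
  have he1 : 1 ≤ T c := hT.2.1 _ hc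
  have hfe : {c' | InSkew ν lam c' ∧ T c' = T c}.Finite := val_fin hT he1
  have hce : {c' | InSkew ν lam c' ∧ T c' = T c}.ncard = g := by
    have h2 := val_card hT he1
    rwa [show rectP g h (T c - 1) = g from if_pos (by omega)] at h2
  have hfs : {c' | InSkew ν lam c' ∧ T c' = T c + 1}.Finite := val_fin hT (by omega)
  have hcs : {c' | InSkew ν lam c' ∧ T c' = T c + 1}.ncard = g := by
    have h2 := val_card hT (show 1 ≤ T c + 1 by omega)
    rwa [show rectP g h (T c + 1 - 1) = g from if_pos (by omega)] at h2
  by_contra hno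
  push_neg at hno
  have hallbef : ∀ c' ∈ {c' | InSkew ν lam c' ∧ T c' = T c + 1}, ReadBefore c' c := by
    rintro ⟨x, y⟩ ⟨hsk, hval⟩
    obtain ⟨a, b⟩ := c
    have hxa : ¬ a < x := fun hax => hno (x, y) hsk hax hval
    show x < a ∨ (x = a ∧ b < y)
    rcases Nat.lt_or_ge x a with hxlt | hxge
    · exact Or.inl hxlt
    · have hxeq : x = a := by omega
      subst hxeq
      rcases Nat.lt_trichotomy b y with h' | h' | h'
      · exact Or.inr ⟨rfl, h'⟩
      · exfalso; rw [← h'] at hval; omega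
      · exfalso
        have hmono : T (x, y) ≤ T (x, b) := hT.2.2.1 x y b hsk hc (by omega)
        omega
  have hnes : {c' | InSkew ν lam c' ∧ T c' = T c + 1}.Nonempty :=
    Set.nonempty_of_ncard_ne_zero (by omega)
  obtain ⟨m₁, hm₁, hmax⟩ := exists_rb_max hfs hnes
  obtain ⟨hm₁sk, hm₁v⟩ := hm₁
  have hball := hT.2.2.2.2.2 m₁ hm₁sk (T c) he1
  have hL : {c' | InSkew ν lam c' ∧ (ReadBefore c' m₁ ∨ c' = m₁) ∧ T c' = T c + 1}
      = {c' | InSkew ν lam c' ∧ T c' = T c + 1} := by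
    ext c'
    constructor
    · rintro ⟨h1, _, h3⟩; exact ⟨h1, h3⟩
    · rintro ⟨h1, h3⟩
      rcases hmax c' ⟨h1, h3⟩ with rfl | hrb
      · exact ⟨h1, Or.inr rfl, h3⟩
      · exact ⟨h1, Or.inl hrb, h3⟩
  rw [hL, hcs] at hball
  have hsubset : {c' | InSkew ν lam c' ∧ (ReadBefore c' m₁ ∨ c' = m₁) ∧ T c' = T c}
      ⊆ {c' | InSkew ν lam c' ∧ T c' = T c} := fun c' hc' => ⟨hc'.1, hc'.2.2⟩
  have heqs := Set.eq_of_subset_of_ncard_le hsubset (by rw [hce]; exact hball) hfe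
  have hcmem : c ∈ {c' | InSkew ν lam c' ∧ T c' = T c} := ⟨hc, rfl⟩
  rw [← heqs] at hcmem
  obtain ⟨-, hbef, -⟩ := hcmem
  have hm₁bef : ReadBefore m₁ c := hallbef m₁ ⟨hm₁sk, hm₁v⟩
  rcases hbef with hrb | heq2
  · exact rb_asymm hrb hm₁bef
  · rw [← heq2] at hm₁v; omega

/-- entries are bounded below by the row index, when `μ = g^{l-1}`, `g ≥ 1`,
`ν ⊆ l × k`. -/
lemma lower (hν : InRect ν l k) (hT : IsLRFilling lam (rectP g (l - 1)) ν T)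
    (hg : 1 ≤ g) : ∀ c, InSkew ν lam c → c.1 ≤ T c := by
  suffices key : ∀ n c, l - c.1 ≤ n → InSkew ν lam c → c.1 ≤ T c by
    intro c hc; exact key l c (by omega) hc
  intro n
  induction n with
  | zero =>
    intro c hn hc
    exfalso
    have h0 : ν c.1 = 0 := hν.2.2 c.1 (by omega)
    have h2 : c.2 < ν c.1 := hc.2
    omega
  | succ n ih =>
    intro c hn hc
    have hrowlt : c.1 < l := by
      by_contra hh
      push_neg at hh
      have h0 : ν c.1 = 0 := hν.2.2 c.1 hh
      have h2 : c.2 < ν c.1 := hc.2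
      omega
    by_contra hlt
    push_neg at hlt
    have hh : T c < l - 1 := by omega
    obtain ⟨c', hc'sk, hc'row, hc'val⟩ := exists_succ hT hg hc hh
    have h2 : c'.1 ≤ T c' := ih c' (by omega) hc'sk
    omega

end Stmt14

namespace Stmt14

/-- The set of cells of the skew shape in row `i`. -/
def RowSet (ν lam : ℕ → ℕ) (i : ℕ) : Set (ℕ × ℕ) := {c | InSkew ν lam c ∧ c.1 = i}

/-- The cells of row `i` carrying entry `i`. -/
def BSet (ν lam : ℕ → ℕ) (T : ℕ × ℕ → ℕ) (i : ℕ) : Set (ℕ × ℕ) :=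
  {c | InSkew ν lam c ∧ c.1 = i ∧ T c = i}

/-- The cells of row `i` carrying entry `i + 1`. -/
def ASet (ν lam : ℕ → ℕ) (T : ℕ × ℕ → ℕ) (i : ℕ) : Set (ℕ × ℕ) :=
  {c | InSkew ν lam c ∧ c.1 = i ∧ T c = i + 1}

variable {g l k : ℕ} {lam mu ν : ℕ → ℕ} {T T' : ℕ × ℕ → ℕ}

lemma row_fin (hν : InRect ν l k) (lam : ℕ → ℕ) (i : ℕ) : (RowSet ν lam i).Finite := by
  apply Set.Finite.subset ((Set.finite_Iio k).image (fun j => (i, j)))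
  rintro ⟨a, b⟩ ⟨hsk, rfl⟩
  refine ⟨b, ?_, rfl⟩
  have h1 : b < ν a := hsk.2
  have h2 : ν a ≤ ν 0 := hν.1.1 0 a (Nat.zero_le a)
  have h3 : ν 0 ≤ k := hν.2.1
  exact lt_of_lt_of_le h1 (le_trans h2 h3)

lemma bset_fin (hν : InRect ν l k) (T : ℕ × ℕ → ℕ) (i : ℕ) : (BSet ν lam T i).Finite :=
  (row_fin hν lam i).subset (fun c hc => ⟨hc.1, hc.2.1⟩)

lemma aset_fin (hν : InRect ν l k) (T : ℕ × ℕ → ℕ) (i : ℕ) : (ASet ν lam T i).Finite :=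
  (row_fin hν lam i).subset (fun c hc => ⟨hc.1, hc.2.1⟩)

lemma row_split (hν : InRect ν l k) (hT : IsLRFilling lam (rectP g (l - 1)) ν T)
    (hg : 1 ≤ g) (i : ℕ) : RowSet ν lam i = BSet ν lam T i ∪ ASet ν lam T i := by
  ext ⟨a, b⟩
  simp only [RowSet, BSet, ASet, Set.mem_setOf_eq, Set.mem_union]
  constructor
  · rintro ⟨hsk, rfl⟩
    have hu : T (a, b) ≤ a + 1 := upper hT a b hsk
    have hlo : a ≤ T (a, b) := lower hν hT hg (a, b) hsk
    rcases Nat.lt_or_ge (T (a, b)) (a + 1) with hcase | hcase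
    · exact Or.inl ⟨hsk, rfl, by omega⟩
    · exact Or.inr ⟨hsk, rfl, by omega⟩
  · rintro (⟨hsk, rfl, _⟩ | ⟨hsk, rfl, _⟩) <;> exact ⟨hsk, rfl⟩

lemma row_card (hν : InRect ν l k) (hT : IsLRFilling lam (rectP g (l - 1)) ν T)
    (hg : 1 ≤ g) (i : ℕ) :
    (RowSet ν lam i).ncard = (BSet ν lam T i).ncard + (ASet ν lam T i).ncard := by
  rw [row_split hν hT hg i]
  refine Set.ncard_union_eq ?_ (bset_fin hν T i) (aset_fin hν T i)
  rw [Set.disjoint_left]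
  rintro ⟨a, b⟩ ⟨_, _, h1⟩ ⟨_, _, h2⟩
  omega

lemma val_split (hν : InRect ν l k) (hT : IsLRFilling lam (rectP g (l - 1)) ν T)
    (hg : 1 ≤ g) {m : ℕ} (h1 : 1 ≤ m) (h2 : m ≤ l - 1) :
    {c | InSkew ν lam c ∧ T c = m} = ASet ν lam T (m - 1) ∪ BSet ν lam T m := by
  ext ⟨a, b⟩
  simp only [ASet, BSet, Set.mem_setOf_eq, Set.mem_union]
  constructor
  · rintro ⟨hsk, hv⟩
    have hu : T (a, b) ≤ a + 1 := upper hT a b hsk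
    have hlo : a ≤ T (a, b) := lower hν hT hg (a, b) hsk
    by_cases ha : a = m
    · exact Or.inr ⟨hsk, ha, by omega⟩
    · exact Or.inl ⟨hsk, by omega, by omega⟩
  · rintro (⟨hsk, ha, hv⟩ | ⟨hsk, ha, hv⟩) <;> exact ⟨hsk, by omega⟩

lemma val_card_split (hν : InRect ν l k) (hT : IsLRFilling lam (rectP g (l - 1)) ν T)
    (hg : 1 ≤ g) {m : ℕ} (h1 : 1 ≤ m) (h2 : m ≤ l - 1) :
    g = (ASet ν lam T (m - 1)).ncard + (BSet ν lam T m).ncard := by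
  have hc := val_card hT h1
  rw [show rectP g (l - 1) (m - 1) = g from if_pos (by omega)] at hc
  rw [val_split hν hT hg h1 h2] at hc
  rw [← hc]
  refine Set.ncard_union_eq ?_ (aset_fin hν T (m - 1)) (bset_fin hν T m)
  rw [Set.disjoint_left]
  rintro ⟨a, b⟩ ⟨_, ha1, _⟩ ⟨_, ha2, _⟩
  omega

lemma bset_zero (hT : IsLRFilling lam mu ν T) : BSet ν lam T 0 = ∅ := by
  ext ⟨a, b⟩
  simp only [BSet, Set.mem_setOf_eq, Set.mem_empty_iff_false, iff_false]
  rintro ⟨hsk, rfl, hv⟩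
  have := hT.2.1 _ hsk
  omega

lemma row_empty (hν : InRect ν l k) {i : ℕ} (hi : l ≤ i) : RowSet ν lam i = ∅ := by
  ext ⟨a, b⟩
  simp only [RowSet, Set.mem_setOf_eq, Set.mem_empty_iff_false, iff_false]
  rintro ⟨hsk, rfl⟩
  have h0 : ν a = 0 := hν.2.2 a hi
  have h2 : b < ν a := hsk.2
  omega

lemma bsets_eq (hν : InRect ν l k) (hT : IsLRFilling lam (rectP g (l - 1)) ν T)
    (hT' : IsLRFilling lam (rectP g (l - 1)) ν T') (hg : 1 ≤ g) :
    ∀ i, (BSet ν lam T i).ncard = (BSet ν lam T' i).ncard := by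
  intro i
  induction i with
  | zero => rw [bset_zero hT, bset_zero hT']
  | succ n ih =>
    by_cases hn : n + 1 ≤ l - 1
    · have e1 := val_card_split hν hT hg (m := n + 1) (by omega) hn
      have e2 := val_card_split hν hT' hg (m := n + 1) (by omega) hn
      have r1 := row_card hν hT hg n
      have r2 := row_card hν hT' hg n
      simp only [Nat.add_sub_cancel] at e1 e2
      omega
    · have hre : RowSet ν lam (n + 1) = ∅ := row_empty hν (by omega)
      have b1 : BSet ν lam T (n + 1) = ∅ :=
        Set.eq_empty_of_subset_empty (hre ▸ (fun c hc => ⟨hc.1, hc.2.1⟩))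
      have b2 : BSet ν lam T' (n + 1) = ∅ :=
        Set.eq_empty_of_subset_empty (hre ▸ (fun c hc => ⟨hc.1, hc.2.1⟩))
      rw [b1, b2]

lemma ico_ncard (a b : ℕ) : (Set.Ico a b).ncard = b - a := by
  rw [← Finset.coe_Ico, Set.ncard_coe_finset, Nat.card_Ico]

lemma point (hν : InRect ν l k) (hT : IsLRFilling lam (rectP g (l - 1)) ν T)
    (hg : 1 ≤ g) {i j : ℕ} (hc : InSkew ν lam (i, j)) :
    (T (i, j) = i ↔ j < lam i + (BSet ν lam T i).ncard) := by
  have hinj : Function.Injective (fun j' : ℕ => (i, j')) := by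
    intro a b hab; simpa using hab
  constructor
  · intro hv
    have hseg : (fun j' => (i, j')) '' Set.Ico (lam i) (j + 1) ⊆ BSet ν lam T i := by
      rintro _ ⟨j', hj', rfl⟩
      show (i, j') ∈ BSet ν lam T i
      have hsk' : InSkew ν lam (i, j') := by
        refine ⟨hj'.1, ?_⟩
        have h2 : j < ν i := hc.2
        show j' < ν i
        have : j' < j + 1 := hj'.2
        omega
      refine ⟨hsk', rfl, ?_⟩
      have h1 : T (i, j') ≤ T (i, j) := hT.2.2.1 i j' j hsk' hc (by
        have : j' < j + 1 := hj'.2; omega)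
      have h2 : i ≤ T (i, j') := lower hν hT hg (i, j') hsk'
      omega
    have hcard : ((fun j' => (i, j')) '' Set.Ico (lam i) (j + 1)).ncard = j + 1 - lam i := by
      rw [Set.ncard_image_of_injective _ hinj, ico_ncard]
    have hle := Set.ncard_le_ncard hseg (bset_fin hν T i)
    have hlam : lam i ≤ j := hc.1
    omega
  · intro hj
    by_contra hne
    have hu : T (i, j) ≤ i + 1 := upper hT i j hc
    have hlo : i ≤ T (i, j) := lower hν hT hg (i, j) hc
    have hv : T (i, j) = i + 1 := by omega
    have hsub : BSet ν lam T i ⊆ (fun j' => (i, j')) '' Set.Ico (lam i) j := by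
      rintro ⟨a, b⟩ ⟨hsk, heq, hvb⟩
      have ha : a = i := heq
      subst ha
      have hvb2 : T (a, b) = a := hvb
      have hlamb : lam a ≤ b := hsk.1
      refine ⟨b, ⟨hlamb, ?_⟩, rfl⟩
      by_contra hb
      push_neg at hb
      have hmono : T (a, j) ≤ T (a, b) := hT.2.2.1 a j b hc hsk hb
      omega
    have hcard2 : ((fun j' => (i, j')) '' Set.Ico (lam i) j).ncard = j - lam i := by
      rw [Set.ncard_image_of_injective _ hinj, ico_ncard]
    have hle := Set.ncard_le_ncard hsub ((Set.finite_Ico _ _).image _)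
    rw [hcard2] at hle
    have hlam : lam i ≤ j := hc.1
    omega

theorem lr_unique (hν : InRect ν l k)
    (hT : IsLRFilling lam (rectP g (l - 1)) ν T)
    (hT' : IsLRFilling lam (rectP g (l - 1)) ν T') : T = T' := by
  by_cases hdeg : g = 0 ∨ l ≤ 1
  · have hmu0 : ∀ m, rectP g (l - 1) m = 0 := by
      intro m
      rcases hdeg with rfl | hdeg
      · simp [rectP]
      · have : ¬ m < l - 1 := by omega
        simp [rectP, this]
    funext c
    by_cases hc : InSkew ν lam c
    · exact (val_ne hT hc (hmu0 _)).elim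
    · rw [hT.1 c hc, hT'.1 c hc]
  · push_neg at hdeg
    have hg : 1 ≤ g := by omega
    funext c
    by_cases hc : InSkew ν lam c
    · obtain ⟨i, j⟩ := c
      have p1 := point hν hT hg hc
      have p2 := point hν hT' hg hc
      have hB := bsets_eq hν hT hT' hg i
      have hu1 : T (i, j) ≤ i + 1 := upper hT i j hc
      have hlo1 : i ≤ T (i, j) := lower hν hT hg (i, j) hc
      have hu2 : T' (i, j) ≤ i + 1 := upper hT' i j hc
      have hlo2 : i ≤ T' (i, j) := lower hν hT' hg (i, j) hc
      rw [hB] at p1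
      omega
    · rw [hT.1 c hc, hT'.1 c hc]

end Stmt14

/-- If `μ = (g^{l-1})` is a rectangle at distance one from the top edge of `l × k`,
then for any `λ ⊆ l × k` every LR coefficient `c^ν_{λ,μ}` with `ν ⊆ l × k` is at
most 1. -/
theorem stmt14 (g l k : ℕ) (lam : ℕ → ℕ)
    (hmu : InRect (rectP g (l - 1)) l k) (hlam : InRect lam l k) :
    ∀ ν : ℕ → ℕ, InRect ν l k → lrCoeff lam (rectP g (l - 1)) ν ≤ 1 := by
  intro ν hν
  have hsub : Subsingleton {T : ℕ × ℕ → ℕ // IsLRFilling lam (rectP g (l - 1)) ν T} := by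
    constructor
    rintro ⟨T, hT⟩ ⟨T', hT'⟩
    exact Subtype.ext (Stmt14.lr_unique hν hT hT')
  haveI := hsub
  haveI : Finite {T : ℕ × ℕ → ℕ // IsLRFilling lam (rectP g (l - 1)) ν T} :=
    Finite.of_subsingleton
  exact Finite.card_le_one_iff_subsingleton.mpr hsub
end
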